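/- arXiv:2106.00953 — 5 statements merged into one kernel-verified Lean document; each statement's English description precedes it below -/
import Mathlib

section
/- There exists one and only one invariant probability measure π on (S,Σ), and for every bounded measurable function φ : S → ℝ and every integer n ≥ 1 one has sup_{x∈S} |Pⁿφ(x) − ∫_S φ dπ| ≤ C‖φ‖ e^{−ρn}, where ρ = log(1/(1 − δ·μ(U₀))) > 0 and C = 2/(1 − δ·μ(U₀)), and in particular ρ and C do not depend on φ. -/
/-!
Doeblin's argument. Since `p x ≥ δ • 1_{U₀}`, the operator `P = markovOp μ p` is the sum of a part
that does not depend on the starting point and of a sub-Markov part of mass `b = 1 - δ μ(U₀)`, so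
`P` shrinks the oscillation of a function by the factor `b`. By duality the operator
`T = markovDualOp μ p` transporting densities with respect to `μ` contracts the `L¹(μ)` norm of
densities of mass zero by `b`, and it maps `L¹(μ)` to bounded functions, so the densities `Tⁿ 1` of
the laws of the chain started from `μ` converge uniformly to a fixed point `h` of `T`; then
`π = h • μ` is invariant. For any stationary probability measure `ν`, `∫ φ dν = ∫ Pⁿ φ dν` lies in
the range of `Pⁿ φ`, whose oscillation is at most `bⁿ` times that of `φ`: this gives the rate of
convergence and, comparing two stationary measures, uniqueness.
-/

open MeasureTheory

open Set Filter Topology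

lemma abs_indicator_one_le {α : Type*} (E : Set α) (x : α) : |E.indicator (1 : α → ℝ) x| ≤ 1 := by
  by_cases hx : x ∈ E <;> simp [hx]

section MarkovChain

variable {S : Type*} [MeasurableSpace S]

structure IsTransitionDensity (μ : Measure S) (p : S × S → ℝ) (M : ℝ) : Prop where
  measurable : Measurable p
  nonneg : ∀ z, 0 ≤ p z
  le_bound : ∀ z, p z ≤ M
  integral_eq_one : ∀ x, ∫ y, p (x, y) ∂μ = 1

noncomputable def markovOp (μ : Measure S) (p : S × S → ℝ) (ψ : S → ℝ) (x : S) : ℝ :=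
  ∫ y, p (x, y) * ψ y ∂μ

/-- If `ν = g • μ`, then `ν P = markovDualOp μ p g • μ`. -/
noncomputable def markovDualOp (ν : Measure S) (p : S × S → ℝ) (g : S → ℝ) (y : S) : ℝ :=
  ∫ x, p (x, y) * g x ∂ν

def IsStationaryMeasure (μ : Measure S) (p : S × S → ℝ) (ν : Measure S) : Prop :=
  ∀ E, MeasurableSet E → (ν E).toReal = ∫ x, (∫ y in E, p (x, y) ∂μ) ∂ν

def IsMarkovOpInvariant (μ : Measure S) (p : S × S → ℝ) (ν : Measure S) : Prop :=
  ∀ φ : S → ℝ, Measurable φ → ∀ K, (∀ x, |φ x| ≤ K) →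
    ∫ x, markovOp μ p φ x ∂ν = ∫ x, φ x ∂ν

section Integration

variable {μ : Measure S}

lemma integrable_of_abs_le [IsFiniteMeasure μ] {f : S → ℝ} (hf : Measurable f)
    {C : ℝ} (hC : ∀ x, |f x| ≤ C) : Integrable f μ :=
  .of_bound hf.aestronglyMeasurable C (ae_of_all _ fun x => (Real.norm_eq_abs _).trans_le (hC x))

lemma abs_integral_le_of_abs_le [IsProbabilityMeasure μ] {f : S → ℝ} {C : ℝ}
    (hC : ∀ x, |f x| ≤ C) : |∫ x, f x ∂μ| ≤ C := by
  simpa using norm_integral_le_of_norm_le_const (μ := μ)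
    (ae_of_all _ fun x => (Real.norm_eq_abs _).trans_le (hC x))

lemma integral_mem_Icc [IsProbabilityMeasure μ] {f : S → ℝ} (hf : Measurable f) {a a' : ℝ}
    (hf_mem : ∀ x, f x ∈ Icc a a') : ∫ x, f x ∂μ ∈ Icc a a' := by
  have hfi : Integrable f μ :=
    integrable_of_abs_le hf fun x => abs_le_max_abs_abs (hf_mem x).1 (hf_mem x).2
  constructor
  · simpa using integral_mono (integrable_const a) hfi fun x => (hf_mem x).1
  · simpa using integral_mono hfi (integrable_const a') fun x => (hf_mem x).2

lemma integral_mul_mem_Icc {k ψ : S → ℝ} (hk : Integrable k μ) (hk0 : ∀ y, 0 ≤ k y)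
    (hψ : Measurable ψ) {a a' : ℝ} (hψ_mem : ∀ y, ψ y ∈ Icc a a') :
    ∫ y, k y * ψ y ∂μ ∈ Icc ((∫ y, k y ∂μ) * a) ((∫ y, k y ∂μ) * a') := by
  have hkψ : Integrable (fun y => k y * ψ y) μ :=
    hk.mul_bdd hψ.aestronglyMeasurable
      (ae_of_all _ fun y => abs_le_max_abs_abs (hψ_mem y).1 (hψ_mem y).2)
  rw [← integral_mul_const, ← integral_mul_const]
  exact ⟨integral_mono (hk.mul_const a) hkψ fun y =>
      mul_le_mul_of_nonneg_left (hψ_mem y).1 (hk0 y),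
    integral_mono hkψ (hk.mul_const a') fun y =>
      mul_le_mul_of_nonneg_left (hψ_mem y).2 (hk0 y)⟩

lemma integral_withDensity_ofReal {q : S → ℝ} (hq : Measurable q) (hq0 : ∀ y, 0 ≤ q y)
    (φ : S → ℝ) :
    ∫ x, φ x ∂μ.withDensity (fun y => ENNReal.ofReal (q y)) = ∫ x, q x * φ x ∂μ := by
  rw [integral_withDensity_eq_integral_toReal_smul hq.ennreal_ofReal
    (ae_of_all _ fun _ => ENNReal.ofReal_lt_top)]
  simp [ENNReal.toReal_ofReal (hq0 _)]

lemma isProbabilityMeasure_withDensity_ofReal {q : S → ℝ} (hq0 : ∀ y, 0 ≤ q y)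
    (hq_int : ∫ y, q y ∂μ = 1) :
    IsProbabilityMeasure (μ.withDensity fun y => ENNReal.ofReal (q y)) := by
  constructor
  rw [withDensity_apply _ MeasurableSet.univ, Measure.restrict_univ,
    ← ofReal_integral_eq_lintegral_ofReal (.of_integral_ne_zero (by simp [hq_int]))
      (ae_of_all _ hq0), hq_int, ENNReal.ofReal_one]

end Integration

lemma measurable_markovOp {μ : Measure S} [SFinite μ] {p : S × S → ℝ} (hp : Measurable p)
    {ψ : S → ℝ} (hψ : Measurable ψ) : Measurable (markovOp μ p ψ) :=
  (hp.mul (hψ.comp measurable_snd)).stronglyMeasurable.integral_prod_right'.measurable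

lemma measurable_markovOp_iterate {μ : Measure S} [SFinite μ] {p : S × S → ℝ}
    (hp : Measurable p) {ψ : S → ℝ} (hψ : Measurable ψ) (n : ℕ) :
    Measurable ((markovOp μ p)^[n] ψ) := by
  induction n with
  | zero => exact hψ
  | succ n ih => rw [Function.iterate_succ_apply']; exact measurable_markovOp hp ih

lemma measurable_markovDualOp {ν : Measure S} [SFinite ν] {p : S × S → ℝ} (hp : Measurable p)
    {g : S → ℝ} (hg : Measurable g) : Measurable (markovDualOp ν p g) :=
  (hp.mul (hg.comp measurable_fst)).stronglyMeasurable.integral_prod_left'.measurable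

lemma markovOp_indicator_one {μ : Measure S} {p : S × S → ℝ} {E : Set S} (hE : MeasurableSet E)
    (x : S) : markovOp μ p (E.indicator 1) x = ∫ y in E, p (x, y) ∂μ := by
  rw [markovOp, ← integral_indicator hE]
  congr 1
  funext y
  by_cases hy : y ∈ E <;> simp [hy]

namespace IsTransitionDensity

variable {μ ν : Measure S} {p : S × S → ℝ} {M : ℝ}

lemma abs_le_bound (hp : IsTransitionDensity μ p M) (z : S × S) : |p z| ≤ M :=
  (abs_of_nonneg (hp.nonneg z)).trans_le (hp.le_bound z)

lemma abs_mul_le (hp : IsTransitionDensity μ p M) {f : S → ℝ} {C : ℝ} (hC : ∀ x, |f x| ≤ C)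
    (z : S × S) (x : S) : |p z * f x| ≤ M * C := by
  rw [abs_mul]
  exact mul_le_mul (hp.abs_le_bound z) (hC x) (abs_nonneg _)
    ((abs_nonneg _).trans (hp.abs_le_bound z))

lemma integrable_right [IsFiniteMeasure μ] (hp : IsTransitionDensity μ p M) (x : S) :
    Integrable (fun y => p (x, y)) μ :=
  integrable_of_abs_le (hp.measurable.comp measurable_prodMk_left) fun _ => hp.abs_le_bound _

lemma integrable_mul_left [IsFiniteMeasure ν] (hp : IsTransitionDensity μ p M) {g : S → ℝ}
    (hg : Measurable g) {C : ℝ} (hC : ∀ x, |g x| ≤ C) (y : S) :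
    Integrable (fun x => p (x, y) * g x) ν :=
  integrable_of_abs_le ((hp.measurable.comp measurable_prodMk_right).mul hg)
    fun x => hp.abs_mul_le hC _ x

lemma one_le_bound [IsProbabilityMeasure μ] (hp : IsTransitionDensity μ p M) : 1 ≤ M := by
  obtain ⟨x⟩ := nonempty_of_isProbabilityMeasure μ
  simpa [hp.integral_eq_one x] using
    abs_integral_le_of_abs_le (μ := μ) fun y => hp.abs_le_bound (x, y)

lemma mul_measureReal_le_one [IsProbabilityMeasure μ] (hp : IsTransitionDensity μ p M)
    {U₀ : Set S} (hU₀ : MeasurableSet U₀) {δ : ℝ} (hp_low : ∀ x, ∀ y ∈ U₀, δ ≤ p (x, y)) :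
    δ * μ.real U₀ ≤ 1 := by
  obtain ⟨x⟩ := nonempty_of_isProbabilityMeasure μ
  calc δ * μ.real U₀ = ∫ y, U₀.indicator (fun _ => δ) y ∂μ := by
        rw [integral_indicator_const _ hU₀, smul_eq_mul, mul_comm]
    _ ≤ ∫ y, p (x, y) ∂μ := by
        refine integral_mono ((integrable_const δ).indicator hU₀) (hp.integrable_right x)
          fun y => ?_
        by_cases hy : y ∈ U₀
        · simpa [hy] using hp_low x y hy
        · simpa [hy] using hp.nonneg (x, y)
    _ = 1 := hp.integral_eq_one x

lemma markovOp_mem_Icc [IsProbabilityMeasure μ] (hp : IsTransitionDensity μ p M) {ψ : S → ℝ}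
    (hψ : Measurable ψ) {a a' : ℝ} (hψ_mem : ∀ y, ψ y ∈ Icc a a') (x : S) :
    markovOp μ p ψ x ∈ Icc a a' := by
  simpa [markovOp, hp.integral_eq_one x] using
    integral_mul_mem_Icc (hp.integrable_right x) (fun y => hp.nonneg _) hψ hψ_mem

lemma markovOp_iterate_mem_Icc [IsProbabilityMeasure μ] (hp : IsTransitionDensity μ p M)
    {ψ : S → ℝ} (hψ : Measurable ψ) {a a' : ℝ} (hψ_mem : ∀ y, ψ y ∈ Icc a a') (n : ℕ) (x : S) :
    (markovOp μ p)^[n] ψ x ∈ Icc a a' := by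
  induction n generalizing x with
  | zero => exact hψ_mem x
  | succ n ih =>
    rw [Function.iterate_succ_apply']
    exact hp.markovOp_mem_Icc (measurable_markovOp_iterate hp.measurable hψ n) ih x

lemma exists_markovOp_mem_Icc [IsProbabilityMeasure μ] (hp : IsTransitionDensity μ p M)
    {U₀ : Set S} (hU₀ : MeasurableSet U₀) {δ : ℝ} (hp_low : ∀ x, ∀ y ∈ U₀, δ ≤ p (x, y))
    {ψ : S → ℝ} (hψ : Measurable ψ) {a w : ℝ} (hψ_mem : ∀ y, ψ y ∈ Icc a (a + w)) :
    ∃ c, ∀ x, markovOp μ p ψ x ∈ Icc c (c + (1 - δ * μ.real U₀) * w) := by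
  have hψC : ∀ y, |ψ y| ≤ max |a| |a + w| :=
    fun y => abs_le_max_abs_abs (hψ_mem y).1 (hψ_mem y).2
  refine ⟨(1 - δ * μ.real U₀) * a + δ * ∫ y in U₀, ψ y ∂μ, fun x => ?_⟩
  set r : S → ℝ := fun y => p (x, y) - U₀.indicator (fun _ => δ) y
  have hδ_int : Integrable (U₀.indicator fun _ => δ) μ := (integrable_const δ).indicator hU₀
  have hr_int : Integrable r μ := (hp.integrable_right x).sub hδ_int
  have hr0 : ∀ y, 0 ≤ r y := fun y => by
    by_cases hy : y ∈ U₀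
    · simpa [r, hy] using hp_low x y hy
    · simpa [r, hy] using hp.nonneg (x, y)
  have hr_mass : ∫ y, r y ∂μ = 1 - δ * μ.real U₀ := by
    simp only [r]
    rw [integral_sub (hp.integrable_right x) hδ_int, hp.integral_eq_one,
      integral_indicator_const _ hU₀, smul_eq_mul, mul_comm]
  have hsplit : markovOp μ p ψ x = ∫ y, r y * ψ y ∂μ + δ * ∫ y in U₀, ψ y ∂μ := by
    rw [← integral_const_mul, ← integral_indicator hU₀, ← integral_add]
    · refine integral_congr_ae (ae_of_all _ fun y => ?_)
      by_cases hy : y ∈ U₀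
      · simp [r, hy]; ring
      · simp [r, hy]
    · exact hr_int.mul_bdd hψ.aestronglyMeasurable (ae_of_all _ hψC)
    · exact ((integrable_of_abs_le hψ hψC).const_mul δ).indicator hU₀
  have hmem := integral_mul_mem_Icc hr_int hr0 hψ hψ_mem
  rw [hr_mass] at hmem
  rw [hsplit]
  constructor <;> nlinarith [hmem.1, hmem.2]

lemma exists_markovOp_iterate_mem_Icc [IsProbabilityMeasure μ] (hp : IsTransitionDensity μ p M)
    {U₀ : Set S} (hU₀ : MeasurableSet U₀) {δ : ℝ} (hp_low : ∀ x, ∀ y ∈ U₀, δ ≤ p (x, y))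
    {ψ : S → ℝ} (hψ : Measurable ψ) {a w : ℝ} (hψ_mem : ∀ y, ψ y ∈ Icc a (a + w)) (n : ℕ) :
    ∃ c, ∀ x, (markovOp μ p)^[n] ψ x ∈ Icc c (c + (1 - δ * μ.real U₀) ^ n * w) := by
  induction n with
  | zero => exact ⟨a, by simpa using hψ_mem⟩
  | succ n ih =>
    obtain ⟨c, hc⟩ := ih
    obtain ⟨c', hc'⟩ := hp.exists_markovOp_mem_Icc hU₀ hp_low
      (measurable_markovOp_iterate hp.measurable hψ n) hc
    refine ⟨c', fun x => ?_⟩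
    rw [Function.iterate_succ_apply', pow_succ', mul_assoc]
    exact hc' x

lemma integral_mul_markovOp [IsFiniteMeasure μ] [IsFiniteMeasure ν]
    (hp : IsTransitionDensity μ p M) {g ψ : S → ℝ} (hg : Measurable g) {C : ℝ}
    (hgC : ∀ x, |g x| ≤ C) (hψ : Measurable ψ) {D : ℝ} (hψD : ∀ y, |ψ y| ≤ D) :
    ∫ x, g x * markovOp μ p ψ x ∂ν = ∫ y, markovDualOp ν p g y * ψ y ∂μ := by
  have hF : Integrable (Function.uncurry fun x y => g x * (p (x, y) * ψ y)) (ν.prod μ) := by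
    refine integrable_of_abs_le (C := C * (M * D)) ((hg.comp measurable_fst).mul
      (hp.measurable.mul (hψ.comp measurable_snd))) fun ⟨x, y⟩ => ?_
    rw [Function.uncurry_apply_pair, abs_mul]
    exact mul_le_mul (hgC x) (hp.abs_mul_le hψD (x, y) y) (abs_nonneg _)
      ((abs_nonneg _).trans (hgC x))
  calc ∫ x, g x * markovOp μ p ψ x ∂ν = ∫ x, ∫ y, g x * (p (x, y) * ψ y) ∂μ ∂ν := by
        simp only [markovOp, integral_const_mul]
    _ = ∫ y, ∫ x, g x * (p (x, y) * ψ y) ∂ν ∂μ := integral_integral_swap hF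
    _ = ∫ y, markovDualOp ν p g y * ψ y ∂μ := by
        simp only [markovDualOp, ← integral_mul_const]
        congr 1; funext y; congr 1; funext x; ring

lemma markovOp_one (hp : IsTransitionDensity μ p M) : markovOp μ p 1 = 1 := by
  funext x
  simp [markovOp, hp.integral_eq_one]

lemma integral_markovDualOp [IsProbabilityMeasure μ] (hp : IsTransitionDensity μ p M)
    {g : S → ℝ} (hg : Measurable g) {C : ℝ} (hgC : ∀ x, |g x| ≤ C) :
    ∫ y, markovDualOp μ p g y ∂μ = ∫ x, g x ∂μ := by
  simpa [hp.markovOp_one] using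
    (hp.integral_mul_markovOp (ν := μ) hg hgC measurable_one fun _ => abs_one.le).symm

lemma abs_markovDualOp_le [IsFiniteMeasure ν] (hp : IsTransitionDensity μ p M) {g : S → ℝ}
    (hg : Measurable g) {C : ℝ} (hgC : ∀ x, |g x| ≤ C) (y : S) :
    |markovDualOp ν p g y| ≤ M * ∫ x, |g x| ∂ν := by
  have hgi : Integrable g ν := integrable_of_abs_le hg hgC
  calc |markovDualOp ν p g y| ≤ ∫ x, |p (x, y) * g x| ∂ν := abs_integral_le_integral_abs
    _ ≤ ∫ x, M * |g x| ∂ν := by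
        refine integral_mono (hp.integrable_mul_left hg hgC y).abs (hgi.abs.const_mul M)
          fun x => ?_
        rw [abs_mul]
        exact mul_le_mul_of_nonneg_right (hp.abs_le_bound _) (abs_nonneg _)
    _ = M * ∫ x, |g x| ∂ν := integral_const_mul _ _

lemma markovDualOp_nonneg (hp : IsTransitionDensity μ p M) {g : S → ℝ} (hg0 : ∀ x, 0 ≤ g x)
    (y : S) : 0 ≤ markovDualOp ν p g y :=
  integral_nonneg fun x => mul_nonneg (hp.nonneg _) (hg0 x)

lemma markovDualOp_sub [IsFiniteMeasure ν] (hp : IsTransitionDensity μ p M) {g₁ g₂ : S → ℝ}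
    (hg₁ : Measurable g₁) {C₁ : ℝ} (hC₁ : ∀ x, |g₁ x| ≤ C₁) (hg₂ : Measurable g₂) {C₂ : ℝ}
    (hC₂ : ∀ x, |g₂ x| ≤ C₂) :
    markovDualOp ν p (g₁ - g₂) = markovDualOp ν p g₁ - markovDualOp ν p g₂ := by
  funext y
  simp only [markovDualOp, Pi.sub_apply, mul_sub]
  exact integral_sub (hp.integrable_mul_left hg₁ hC₁ y) (hp.integrable_mul_left hg₂ hC₂ y)

lemma integral_abs_markovDualOp_le [IsProbabilityMeasure μ] (hp : IsTransitionDensity μ p M)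
    {U₀ : Set S} (hU₀ : MeasurableSet U₀) {δ : ℝ} (hp_low : ∀ x, ∀ y ∈ U₀, δ ≤ p (x, y))
    {g : S → ℝ} (hg : Measurable g) {C : ℝ} (hgC : ∀ x, |g x| ≤ C) (hg0 : ∫ x, g x ∂μ = 0) :
    ∫ y, |markovDualOp μ p g y| ∂μ ≤ (1 - δ * μ.real U₀) * ∫ x, |g x| ∂μ := by
  set b := 1 - δ * μ.real U₀
  -- with `s` the sign of `markovDualOp μ p g`, `∫ |markovDualOp μ p g| = ∫ g * markovOp μ p s`,
  -- and `markovOp μ p s` stays within `b` of a constant, which `g` integrates to zero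
  set s : S → ℝ := fun y => if 0 ≤ markovDualOp μ p g y then 1 else -1
  have hs : Measurable s :=
    Measurable.ite (measurableSet_le measurable_const (measurable_markovDualOp hp.measurable hg))
      measurable_const measurable_const
  have hs_mem : ∀ y, s y ∈ Icc (-1) (-1 + 2) := fun y => by
    simp only [s]; split_ifs <;> norm_num
  have hs_abs : ∀ y, |s y| ≤ 1 := fun y => by
    simp only [s]; split_ifs <;> norm_num
  have habs : ∀ y, |markovDualOp μ p g y| = markovDualOp μ p g y * s y := fun y => by
    simp only [s]
    split_ifs with h
    · rw [abs_of_nonneg h, mul_one]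
    · rw [abs_of_neg (not_le.1 h), mul_neg_one]
  obtain ⟨c, hc⟩ := hp.exists_markovOp_mem_Icc hU₀ hp_low hs hs_mem
  have hPs : ∀ x, |markovOp μ p s x - (c + b)| ≤ b := fun x =>
    abs_sub_le_iff.2 ⟨by linarith [(hc x).2], by linarith [(hc x).1]⟩
  have hPsC : ∀ x, |markovOp μ p s x| ≤ 1 := fun x =>
    abs_le.2 (hp.markovOp_mem_Icc hs (fun y => abs_le.1 (hs_abs y)) x)
  have hgPs : Integrable (fun x => g x * markovOp μ p s x) μ :=
    integrable_of_abs_le (hg.mul (measurable_markovOp hp.measurable hs)) fun x => by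
      rw [abs_mul]
      exact mul_le_mul (hgC x) (hPsC x) (abs_nonneg _) ((abs_nonneg _).trans (hgC x))
  have hgi : Integrable g μ := integrable_of_abs_le hg hgC
  calc ∫ y, |markovDualOp μ p g y| ∂μ = ∫ y, markovDualOp μ p g y * s y ∂μ :=
        integral_congr_ae (ae_of_all _ habs)
    _ = ∫ x, g x * markovOp μ p s x ∂μ := (hp.integral_mul_markovOp hg hgC hs hs_abs).symm
    _ = ∫ x, g x * (markovOp μ p s x - (c + b)) ∂μ := by
        simp only [mul_sub]
        rw [integral_sub hgPs (hgi.mul_const _), integral_mul_const, hg0, zero_mul, sub_zero]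
    _ ≤ ∫ x, |g x| * b ∂μ := by
        refine integral_mono (by simp only [mul_sub]; exact hgPs.sub (hgi.mul_const (c + b)))
          (hgi.abs.mul_const b) fun x => (le_abs_self _).trans ?_
        rw [abs_mul]
        exact mul_le_mul_of_nonneg_left (hPs x) (abs_nonneg _)
    _ = b * ∫ x, |g x| ∂μ := by rw [integral_mul_const, mul_comm]

lemma markovDualOp_iterate_one [IsProbabilityMeasure μ] (hp : IsTransitionDensity μ p M)
    (n : ℕ) : Measurable ((markovDualOp μ p)^[n] 1) ∧
      (∀ y, (markovDualOp μ p)^[n] 1 y ∈ Icc 0 M) ∧ ∫ y, (markovDualOp μ p)^[n] 1 y ∂μ = 1 := by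
  induction n with
  | zero => exact ⟨measurable_one, fun _ => ⟨zero_le_one, hp.one_le_bound⟩, by simp⟩
  | succ n ih =>
    obtain ⟨hf, hf_mem, hf_int⟩ := ih
    have hfC : ∀ y, |(markovDualOp μ p)^[n] 1 y| ≤ M := fun y =>
      abs_le.2 ⟨by linarith [(hf_mem y).1, hp.one_le_bound], (hf_mem y).2⟩
    rw [Function.iterate_succ_apply']
    refine ⟨measurable_markovDualOp hp.measurable hf, fun y => ⟨?_, ?_⟩,
      by rw [hp.integral_markovDualOp hf hfC, hf_int]⟩
    · exact hp.markovDualOp_nonneg (fun x => (hf_mem x).1) y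
    · have h := hp.abs_markovDualOp_le (ν := μ) hf hfC y
      rw [integral_congr_ae (ae_of_all _ fun x => abs_of_nonneg (hf_mem x).1), hf_int,
        mul_one] at h
      exact (le_abs_self _).trans h

lemma abs_markovDualOp_iterate_one_le [IsProbabilityMeasure μ]
    (hp : IsTransitionDensity μ p M) (n : ℕ) (y : S) : |(markovDualOp μ p)^[n] 1 y| ≤ M :=
  have h := (hp.markovDualOp_iterate_one n).2.1 y
  abs_le.2 ⟨by linarith [h.1, hp.one_le_bound], h.2⟩

lemma abs_markovDualOp_iterate_one_sub_le [IsProbabilityMeasure μ]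
    (hp : IsTransitionDensity μ p M) (n : ℕ) (y : S) :
    |(markovDualOp μ p)^[n + 1] 1 y - (markovDualOp μ p)^[n] 1 y| ≤ M :=
  have h := hp.markovDualOp_iterate_one
  abs_sub_le_of_nonneg_of_le ((h _).2.1 y).1 ((h _).2.1 y).2 ((h _).2.1 y).1 ((h _).2.1 y).2

lemma markovDualOp_iterate_one_sub [IsProbabilityMeasure μ] (hp : IsTransitionDensity μ p M)
    (n : ℕ) : (markovDualOp μ p)^[n + 2] 1 - (markovDualOp μ p)^[n + 1] 1 =
      markovDualOp μ p ((markovDualOp μ p)^[n + 1] 1 - (markovDualOp μ p)^[n] 1) := by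
  have hf := hp.markovDualOp_iterate_one
  have hfC := hp.abs_markovDualOp_iterate_one_le
  rw [hp.markovDualOp_sub (hf _).1 (hfC _) (hf _).1 (hfC _), Function.iterate_succ_apply',
    Function.iterate_succ_apply' _ n]

lemma integral_abs_markovDualOp_iterate_one_sub_le [IsProbabilityMeasure μ]
    (hp : IsTransitionDensity μ p M) {U₀ : Set S} (hU₀ : MeasurableSet U₀) {δ : ℝ}
    (hp_low : ∀ x, ∀ y ∈ U₀, δ ≤ p (x, y)) (n : ℕ) :
    ∫ y, |(markovDualOp μ p)^[n + 1] 1 y - (markovDualOp μ p)^[n] 1 y| ∂μ ≤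
      (1 - δ * μ.real U₀) ^ n * 2 := by
  have hf := hp.markovDualOp_iterate_one
  have hint : ∀ n, Integrable ((markovDualOp μ p)^[n] 1) μ := fun n =>
    integrable_of_abs_le (hf n).1 (hp.abs_markovDualOp_iterate_one_le n)
  induction n with
  | zero =>
    calc _ ≤ ∫ y, ((markovDualOp μ p)^[1] 1 y + (markovDualOp μ p)^[0] 1 y) ∂μ :=
          integral_mono ((hint 1).sub (hint 0)).abs ((hint 1).add (hint 0)) fun y =>
            abs_sub_le_iff.2 ⟨by linarith [((hf 0).2.1 y).1], by linarith [((hf 1).2.1 y).1]⟩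
      _ = (1 - δ * μ.real U₀) ^ 0 * 2 := by
          rw [integral_add (hint 1) (hint 0), (hf 1).2.2, (hf 0).2.2]; norm_num
  | succ n ih =>
    have hmean : ∫ y, ((markovDualOp μ p)^[n + 1] 1 - (markovDualOp μ p)^[n] 1) y ∂μ = 0 := by
      rw [integral_sub' (hint _) (hint _), (hf _).2.2, (hf _).2.2, sub_self]
    calc _ = ∫ y, |markovDualOp μ p
            ((markovDualOp μ p)^[n + 1] 1 - (markovDualOp μ p)^[n] 1) y| ∂μ :=
          integral_congr_ae (ae_of_all _ fun y =>
            congrArg abs (congr_fun (hp.markovDualOp_iterate_one_sub n) y))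
      _ ≤ (1 - δ * μ.real U₀) *
          ∫ y, |((markovDualOp μ p)^[n + 1] 1 - (markovDualOp μ p)^[n] 1) y| ∂μ :=
          hp.integral_abs_markovDualOp_le hU₀ hp_low ((hf _).1.sub (hf _).1)
            (hp.abs_markovDualOp_iterate_one_sub_le n) hmean
      _ ≤ (1 - δ * μ.real U₀) * ((1 - δ * μ.real U₀) ^ n * 2) := by
          gcongr
          · linarith [hp.mul_measureReal_le_one hU₀ hp_low]
          · exact ih
      _ = _ := by ring

lemma abs_markovDualOp_iterate_one_sub_le_geometric [IsProbabilityMeasure μ]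
    (hp : IsTransitionDensity μ p M) {U₀ : Set S} (hU₀ : MeasurableSet U₀) {δ : ℝ}
    (hp_low : ∀ x, ∀ y ∈ U₀, δ ≤ p (x, y)) (n : ℕ) (y : S) :
    |(markovDualOp μ p)^[n + 2] 1 y - (markovDualOp μ p)^[n + 1] 1 y| ≤
      2 * M * (1 - δ * μ.real U₀) ^ n := by
  have hf := hp.markovDualOp_iterate_one
  calc _ = |markovDualOp μ p ((markovDualOp μ p)^[n + 1] 1 - (markovDualOp μ p)^[n] 1) y| :=
        congrArg abs (congr_fun (hp.markovDualOp_iterate_one_sub n) y)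
    _ ≤ M * ∫ x, |((markovDualOp μ p)^[n + 1] 1 - (markovDualOp μ p)^[n] 1) x| ∂μ :=
        hp.abs_markovDualOp_le ((hf _).1.sub (hf _).1) (hp.abs_markovDualOp_iterate_one_sub_le n) y
    _ ≤ M * ((1 - δ * μ.real U₀) ^ n * 2) := by
        gcongr
        · linarith [hp.one_le_bound]
        · exact hp.integral_abs_markovDualOp_iterate_one_sub_le hU₀ hp_low n
    _ = 2 * M * (1 - δ * μ.real U₀) ^ n := by ring

lemma exists_tendsto_markovDualOp_iterate_one [IsProbabilityMeasure μ]
    (hp : IsTransitionDensity μ p M) {U₀ : Set S} (hU₀ : MeasurableSet U₀) {δ : ℝ}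
    (hp_low : ∀ x, ∀ y ∈ U₀, δ ≤ p (x, y)) (hb : 0 < δ * μ.real U₀) :
    ∃ h : S → ℝ, ∀ y, Tendsto (fun n => (markovDualOp μ p)^[n] 1 y) atTop (𝓝 (h y)) := by
  have hcauchy : ∀ y, CauchySeq fun n => (markovDualOp μ p)^[n + 1] 1 y := fun y =>
    cauchySeq_of_le_geometric (1 - δ * μ.real U₀) (2 * M) (by linarith) fun n => by
      rw [dist_comm, Real.dist_eq]
      exact hp.abs_markovDualOp_iterate_one_sub_le_geometric hU₀ hp_low n y
  choose h hh using fun y => cauchySeq_tendsto_of_complete (hcauchy y)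
  exact ⟨h, fun y => (tendsto_add_atTop_iff_nat 1).1 (hh y)⟩

lemma tendsto_markovDualOp [IsFiniteMeasure ν] (hp : IsTransitionDensity μ p M)
    {f : ℕ → S → ℝ} {h : S → ℝ} (hf : ∀ n, Measurable (f n)) {C : ℝ}
    (hfC : ∀ n x, |f n x| ≤ C) (hlim : ∀ x, Tendsto (fun n => f n x) atTop (𝓝 (h x))) (y : S) :
    Tendsto (fun n => markovDualOp ν p (f n) y) atTop (𝓝 (markovDualOp ν p h y)) :=
  tendsto_integral_of_dominated_convergence (fun _ => M * C)
    (fun n => ((hp.measurable.comp measurable_prodMk_right).mul (hf n)).aestronglyMeasurable)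
    (integrable_const _)
    (fun n => ae_of_all _ fun x => (Real.norm_eq_abs _).trans_le (hp.abs_mul_le (hfC n) _ x))
    (ae_of_all _ fun x => (hlim x).const_mul _)

lemma exists_markovDualOp_eq_self [IsProbabilityMeasure μ] (hp : IsTransitionDensity μ p M)
    {U₀ : Set S} (hU₀ : MeasurableSet U₀) {δ : ℝ} (hp_low : ∀ x, ∀ y ∈ U₀, δ ≤ p (x, y))
    (hb : 0 < δ * μ.real U₀) :
    ∃ h : S → ℝ, Measurable h ∧ (∀ y, h y ∈ Icc 0 M) ∧ ∫ y, h y ∂μ = 1 ∧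
      markovDualOp μ p h = h := by
  obtain ⟨h, hh⟩ := hp.exists_tendsto_markovDualOp_iterate_one hU₀ hp_low hb
  have hf := hp.markovDualOp_iterate_one
  have hfC := hp.abs_markovDualOp_iterate_one_le
  refine ⟨h, measurable_of_tendsto_metrizable (fun n => (hf n).1) (tendsto_pi_nhds.2 hh),
    fun y => isClosed_Icc.mem_of_tendsto (hh y) (Eventually.of_forall fun n => (hf n).2.1 y),
    ?_, ?_⟩
  · refine tendsto_nhds_unique (tendsto_integral_of_dominated_convergence (fun _ => M)
      (fun n => (hf n).1.aestronglyMeasurable) (integrable_const M)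
      (fun n => ae_of_all _ fun y => (Real.norm_eq_abs _).trans_le (hfC n y)) (ae_of_all _ hh)) ?_
    exact tendsto_const_nhds.congr fun n => ((hf n).2.2).symm
  · funext y
    refine tendsto_nhds_unique (hp.tendsto_markovDualOp (fun n => (hf n).1) hfC hh y) ?_
    exact ((hh y).comp (tendsto_add_atTop_nat 1)).congr fun n => by
      rw [Function.comp_apply, Function.iterate_succ_apply']

lemma isMarkovOpInvariant_withDensity [IsFiniteMeasure μ] (hp : IsTransitionDensity μ p M)
    {q : S → ℝ} (hq : Measurable q) {C : ℝ} (hq_mem : ∀ y, q y ∈ Icc 0 C)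
    (hfix : markovDualOp μ p q = q) :
    IsMarkovOpInvariant μ p (μ.withDensity fun y => ENNReal.ofReal (q y)) := by
  intro φ hφ K hK
  have hqC : ∀ y, |q y| ≤ C := fun y =>
    abs_le.2 ⟨by linarith [(hq_mem y).1, (hq_mem y).2], (hq_mem y).2⟩
  rw [integral_withDensity_ofReal hq (fun y => (hq_mem y).1),
    integral_withDensity_ofReal hq (fun y => (hq_mem y).1),
    hp.integral_mul_markovOp hq hqC hφ hK, hfix]

end IsTransitionDensity

variable {μ ν ν' : Measure S} {p : S × S → ℝ} {M : ℝ}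

lemma IsMarkovOpInvariant.isStationaryMeasure [IsFiniteMeasure ν]
    (hν : IsMarkovOpInvariant μ p ν) : IsStationaryMeasure μ p ν := fun E hE => by
  have h := hν (E.indicator 1) (measurable_one.indicator hE) 1 (abs_indicator_one_le E)
  simp only [markovOp_indicator_one hE, integral_indicator_one hE] at h
  exact h.symm

lemma IsStationaryMeasure.eq_withDensity [IsFiniteMeasure μ] [IsFiniteMeasure ν]
    (hp : IsTransitionDensity μ p M) (hν : IsStationaryMeasure μ p ν) :
    ν = μ.withDensity fun y => ENNReal.ofReal (markovDualOp ν p 1 y) := by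
  have hq := measurable_markovDualOp (ν := ν) hp.measurable measurable_one
  have hq0 := hp.markovDualOp_nonneg (ν := ν) (g := 1) fun _ => zero_le_one
  have hqC := hp.abs_markovDualOp_le (ν := ν) measurable_one fun _ => abs_one.le
  ext E hE
  have h := hp.integral_mul_markovOp (ν := ν) measurable_one (fun _ => abs_one.le)
    (measurable_one.indicator hE) (abs_indicator_one_le E)
  simp only [Pi.one_apply, one_mul, markovOp_indicator_one hE] at h
  rw [withDensity_apply _ hE, ← ofReal_integral_eq_lintegral_ofReal
      (integrable_of_abs_le hq hqC).restrict (ae_of_all _ hq0),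
    ← ENNReal.ofReal_toReal (measure_ne_top ν E), hν E hE, h, ← integral_indicator hE]
  congr 2
  funext y
  by_cases hy : y ∈ E <;> simp [hy]

lemma IsStationaryMeasure.isMarkovOpInvariant [IsFiniteMeasure μ] [IsFiniteMeasure ν]
    (hp : IsTransitionDensity μ p M) (hν : IsStationaryMeasure μ p ν) :
    IsMarkovOpInvariant μ p ν := by
  intro φ hφ K hK
  have h := hp.integral_mul_markovOp (ν := ν) measurable_one (fun _ => abs_one.le) hφ hK
  simp only [Pi.one_apply, one_mul] at h
  calc ∫ x, markovOp μ p φ x ∂ν = ∫ y, markovDualOp ν p 1 y * φ y ∂μ := h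
    _ = ∫ x, φ x ∂μ.withDensity fun y => ENNReal.ofReal (markovDualOp ν p 1 y) :=
        (integral_withDensity_ofReal (measurable_markovDualOp hp.measurable measurable_one)
          (hp.markovDualOp_nonneg fun _ => zero_le_one) φ).symm
    _ = ∫ x, φ x ∂ν := by rw [← hν.eq_withDensity hp]

lemma IsMarkovOpInvariant.integral_markovOp_iterate [IsProbabilityMeasure μ]
    (hν : IsMarkovOpInvariant μ p ν) (hp : IsTransitionDensity μ p M) {φ : S → ℝ}
    (hφ : Measurable φ) {K : ℝ} (hK : ∀ x, |φ x| ≤ K) (n : ℕ) :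
    ∫ x, (markovOp μ p)^[n] φ x ∂ν = ∫ x, φ x ∂ν := by
  induction n with
  | zero => rfl
  | succ n ih =>
    rw [Function.iterate_succ_apply', hν _ (measurable_markovOp_iterate hp.measurable hφ n) K
      fun x => abs_le.2 (hp.markovOp_iterate_mem_Icc hφ (fun y => abs_le.1 (hK y)) n x), ih]

lemma IsMarkovOpInvariant.abs_markovOp_iterate_sub_integral_le [IsProbabilityMeasure μ]
    [IsProbabilityMeasure ν] (hν : IsMarkovOpInvariant μ p ν) (hp : IsTransitionDensity μ p M)
    {U₀ : Set S} (hU₀ : MeasurableSet U₀) {δ : ℝ} (hp_low : ∀ x, ∀ y ∈ U₀, δ ≤ p (x, y))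
    {φ : S → ℝ} (hφ : Measurable φ) {K : ℝ} (hK : ∀ x, |φ x| ≤ K) (n : ℕ) (x : S) :
    |(markovOp μ p)^[n] φ x - ∫ y, φ y ∂ν| ≤ (1 - δ * μ.real U₀) ^ n * (2 * K) := by
  have hφ_mem : ∀ y, φ y ∈ Icc (-K) (-K + 2 * K) := fun y => by
    have := abs_le.1 (hK y); constructor <;> linarith
  obtain ⟨c, hc⟩ := hp.exists_markovOp_iterate_mem_Icc hU₀ hp_low hφ hφ_mem n
  have hint := integral_mem_Icc (μ := ν) (measurable_markovOp_iterate hp.measurable hφ n) hc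
  rw [hν.integral_markovOp_iterate hp hφ hK n] at hint
  exact abs_sub_le_iff.2 ⟨by linarith [(hc x).2, hint.1], by linarith [(hc x).1, hint.2]⟩

lemma IsMarkovOpInvariant.tendsto_markovOp_iterate [IsProbabilityMeasure μ]
    [IsProbabilityMeasure ν] (hν : IsMarkovOpInvariant μ p ν) (hp : IsTransitionDensity μ p M)
    {U₀ : Set S} (hU₀ : MeasurableSet U₀) {δ : ℝ} (hp_low : ∀ x, ∀ y ∈ U₀, δ ≤ p (x, y))
    (hb : 0 < δ * μ.real U₀) {φ : S → ℝ} (hφ : Measurable φ) {K : ℝ} (hK : ∀ x, |φ x| ≤ K)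
    (x : S) : Tendsto (fun n => (markovOp μ p)^[n] φ x) atTop (𝓝 (∫ y, φ y ∂ν)) := by
  refine tendsto_iff_norm_sub_tendsto_zero.2 (squeeze_zero (fun n => norm_nonneg _)
    (fun n => hν.abs_markovOp_iterate_sub_integral_le hp hU₀ hp_low hφ hK n x) ?_)
  simpa using (tendsto_pow_atTop_nhds_zero_of_lt_one
    (by linarith [hp.mul_measureReal_le_one hU₀ hp_low]) (by linarith)).mul_const (2 * K)

lemma IsMarkovOpInvariant.eq [IsProbabilityMeasure μ] [IsProbabilityMeasure ν]
    [IsProbabilityMeasure ν'] (hν : IsMarkovOpInvariant μ p ν) (hν' : IsMarkovOpInvariant μ p ν')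
    (hp : IsTransitionDensity μ p M) {U₀ : Set S} (hU₀ : MeasurableSet U₀) {δ : ℝ}
    (hp_low : ∀ x, ∀ y ∈ U₀, δ ≤ p (x, y)) (hb : 0 < δ * μ.real U₀) : ν = ν' := by
  obtain ⟨x⟩ := nonempty_of_isProbabilityMeasure μ
  ext E hE
  have h := tendsto_nhds_unique
    (hν.tendsto_markovOp_iterate hp hU₀ hp_low hb (measurable_one.indicator hE)
      (abs_indicator_one_le E) x)
    (hν'.tendsto_markovOp_iterate hp hU₀ hp_low hb (measurable_one.indicator hE)
      (abs_indicator_one_le E) x)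
  rwa [integral_indicator_one hE, integral_indicator_one hE, measureReal_def, measureReal_def,
    ENNReal.toReal_eq_toReal_iff' (measure_ne_top _ _) (measure_ne_top _ _)] at h

end MarkovChain

theorem stmt_0_general
    {S : Type*} [MetricSpace S] [CompactSpace S]
    [MeasurableSpace S] [BorelSpace S]
    (μ : Measure S) [IsProbabilityMeasure μ]
    (p : S × S → ℝ) (hp_cont : Continuous p) (hp_nonneg : ∀ z, 0 ≤ p z)
    (hp_int : ∀ x : S, ∫ y, p (x, y) ∂μ = 1)
    (P : (S → ℝ) → (S → ℝ))
    (hP : ∀ (φ : S → ℝ) (x : S), P φ x = ∫ y, p (x, y) * φ y ∂μ)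
    (U₀ : Set S) (hU₀ : MeasurableSet U₀)
    (δ : ℝ)
    (hδμ_pos : 0 < δ * (μ U₀).toReal) (hδμ_lt : δ * (μ U₀).toReal < 1)
    (hp_low : ∀ x : S, ∀ y ∈ U₀, δ ≤ p (x, y)) :
    0 < Real.log (1 / (1 - δ * (μ U₀).toReal)) ∧
    ∃ π : Measure S, IsProbabilityMeasure π ∧
      (∀ E : Set S, MeasurableSet E →
        (π E).toReal = ∫ x, (∫ y in E, p (x, y) ∂μ) ∂π) ∧
      (∀ π' : Measure S, IsProbabilityMeasure π' →
        (∀ E : Set S, MeasurableSet E →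
          (π' E).toReal = ∫ x, (∫ y in E, p (x, y) ∂μ) ∂π') → π' = π) ∧
      (∀ φ : S → ℝ, Measurable φ → (∃ M : ℝ, ∀ x, |φ x| ≤ M) →
        ∀ n : ℕ, 1 ≤ n → ∀ x : S,
          |(P^[n] φ) x - ∫ y, φ y ∂π| ≤
            (2 / (1 - δ * (μ U₀).toReal)) * (⨆ z : S, |φ z|) *
              Real.exp (-(Real.log (1 / (1 - δ * (μ U₀).toReal))) * n)) := by
  obtain ⟨M, hM⟩ := (isCompact_range hp_cont).bddAbove
  have hp : IsTransitionDensity μ p M :=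
    ⟨hp_cont.measurable, hp_nonneg, fun z => hM (mem_range_self z), hp_int⟩
  have hP_eq : P = markovOp μ p := funext fun φ => funext (hP φ)
  set b := 1 - δ * (μ U₀).toReal
  have hb : 0 < b := by linarith
  obtain ⟨h, hh, hh_mem, hh_int, hh_fix⟩ := hp.exists_markovDualOp_eq_self hU₀ hp_low hδμ_pos
  set π := μ.withDensity fun y => ENNReal.ofReal (h y)
  have hπ_prob : IsProbabilityMeasure π :=
    isProbabilityMeasure_withDensity_ofReal (fun y => (hh_mem y).1) hh_int
  have hπ : IsMarkovOpInvariant μ p π := hp.isMarkovOpInvariant_withDensity hh hh_mem hh_fix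
  refine ⟨Real.log_pos (by rw [one_div]; exact one_lt_inv_iff₀.2 ⟨hb, by linarith⟩), π,
    hπ_prob, hπ.isStationaryMeasure,
    fun π' _ hπ' => (IsStationaryMeasure.isMarkovOpInvariant hp hπ').eq hπ hp hU₀ hp_low hδμ_pos,
    ?_⟩
  rintro φ hφ ⟨K, hK⟩ n - x
  have hφ_le : ∀ y, |φ y| ≤ ⨆ z, |φ z| := le_ciSup ⟨K, by rintro _ ⟨z, rfl⟩; exact hK z⟩
  have hexp : Real.exp (-Real.log (1 / b) * n) = b ^ n := by
    rw [one_div, Real.log_inv, neg_neg, mul_comm, Real.exp_nat_mul, Real.exp_log hb]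
  rw [hP_eq, hexp]
  calc _ ≤ b ^ n * (2 * ⨆ z, |φ z|) :=
        hπ.abs_markovOp_iterate_sub_integral_le hp hU₀ hp_low hφ hφ_le n x
    _ ≤ b ^ n * (2 / b * ⨆ z, |φ z|) := by
        gcongr
        · exact (abs_nonneg _).trans (hφ_le x)
        · exact le_div_self zero_le_two hb (by linarith)
    _ = _ := by ring

/-- Doob-type ergodic theorem, Thm 3.3.1 of Bensoussan–Lions–Papanicolaou:
under a uniform minorization condition `p(x,y) ≥ δ` for `y ∈ U₀`, there exists a unique
invariant probability measure `π`, and `Pⁿφ` converges to `∫ φ dπ` uniformly and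
exponentially fast, with explicit constants `ρ = log(1/(1−δμ(U₀)))` and
`C = 2/(1−δμ(U₀))` independent of `φ`. -/
theorem stmt_0
    {S : Type*} [MetricSpace S] [CompactSpace S] [Nonempty S]
    [MeasurableSpace S] [BorelSpace S]
    (μ : Measure S) [IsProbabilityMeasure μ]
    (p : S × S → ℝ) (hp_cont : Continuous p) (hp_nonneg : ∀ z, 0 ≤ p z)
    (hp_int : ∀ x : S, ∫ y, p (x, y) ∂μ = 1)
    (P : (S → ℝ) → (S → ℝ))
    (hP : ∀ (φ : S → ℝ) (x : S), P φ x = ∫ y, p (x, y) * φ y ∂μ)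
    (U₀ : Set S) (hU₀ : MeasurableSet U₀)
    (δ : ℝ) (hδ : 0 < δ)
    (hδμ_pos : 0 < δ * (μ U₀).toReal) (hδμ_lt : δ * (μ U₀).toReal < 1)
    (hp_low : ∀ x : S, ∀ y ∈ U₀, δ ≤ p (x, y)) :
    0 < Real.log (1 / (1 - δ * (μ U₀).toReal)) ∧
    ∃ π : Measure S, IsProbabilityMeasure π ∧
      (∀ E : Set S, MeasurableSet E →
        (π E).toReal = ∫ x, (∫ y in E, p (x, y) ∂μ) ∂π) ∧
      (∀ π' : Measure S, IsProbabilityMeasure π' →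
        (∀ E : Set S, MeasurableSet E →
          (π' E).toReal = ∫ x, (∫ y in E, p (x, y) ∂μ) ∂π') → π' = π) ∧
      (∀ φ : S → ℝ, Measurable φ → (∃ M : ℝ, ∀ x, |φ x| ≤ M) →
        ∀ n : ℕ, 1 ≤ n → ∀ x : S,
          |(P^[n] φ) x - ∫ y, φ y ∂π| ≤
            (2 / (1 - δ * (μ U₀).toReal)) * (⨆ z : S, |φ z|) *
              Real.exp (-(Real.log (1 / (1 - δ * (μ U₀).toReal))) * n)) :=
  stmt_0_general μ p hp_cont hp_nonneg hp_int P hP U₀ hU₀ δ hδμ_pos hδμ_lt hp_low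
end

section
/- The map Φ : ℝ^d → ℝ^d defined by the successive updates x₁* = x₁ + Δt·v₁(x₂,…,x_d), and for i = 2,…,d, x_i* = x_i + Δt·v_i(x₁*,…,x_{i−1}*, x_{i+1},…,x_d), with Φ(x) = (x₁*,…,x_d*), is a bijection of ℝ^d that preserves d-dimensional Lebesgue measure: for every Borel set A ⊆ ℝ^d, λ(Φ⁻¹(A)) = λ(A); i.e., the deterministic part of the volume-preserving splitting scheme is volume-preserving. -/
open MeasureTheory

/-- One update step of the deterministic part of the volume-preserving splitting scheme:
coordinate `i` is replaced by `x i + Δt · v i x`. -/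
noncomputable def schemeStep {d : ℕ} (Δt : ℝ) (v : Fin d → (Fin d → ℝ) → ℝ)
    (i : Fin d) (x : Fin d → ℝ) : Fin d → ℝ :=
  Function.update x i (x i + Δt * v i x)

/-- The deterministic part of the volume-preserving splitting scheme: the coordinates are
updated successively, `x₁* = x₁ + Δt·v₁(x₂,…,x_d)` and, for `i = 2,…,d`,
`x_i* = x_i + Δt·v_i(x₁*,…,x_{i−1}*, x_{i+1},…,x_d)`. -/
noncomputable def schemeMap {d : ℕ} (Δt : ℝ) (v : Fin d → (Fin d → ℝ) → ℝ) :
    (Fin d → ℝ) → (Fin d → ℝ) :=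
  (List.finRange d).foldl (fun F i => schemeStep Δt v i ∘ F) id

/-!
Each step of the scheme is a shear: it translates the `i`-th coordinate by an amount that depends
only on the other coordinates. It is therefore undone by the step with `-Δt`, and after splitting
`ℝ^d` as `ℝ^{d-1} × ℝ` it is a skew product of the identity with translations, which preserves
Lebesgue measure by Fubini. The scheme is a composition of such steps.
-/

open Function

theorem measurePreserving_prod_add_snd {α G : Type*} [MeasurableSpace α] [MeasurableSpace G]
    [AddGroup G] [MeasurableAdd₂ G] (μ : Measure α) (ν : Measure G) [SFinite μ] [SFinite ν]
    [ν.IsAddRightInvariant] {t : α → G} (ht : Measurable t) :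
    MeasurePreserving (fun p : α × G => (p.1, p.2 + t p.1)) (μ.prod ν) (μ.prod ν) :=
  (MeasurePreserving.id μ).skew_product (measurable_snd.add (ht.comp measurable_fst))
    (.of_forall fun a => (measurePreserving_add_right ν (t a)).map_eq)

theorem measurePreserving_update_add {ι : Type*} [Fintype ι] [DecidableEq ι] (i : ι)
    {g : (ι → ℝ) → ℝ} (hg : Measurable g)
    (hg_indep : ∀ x y : ι → ℝ, (∀ j, j ≠ i → x j = y j) → g x = g y) :
    MeasurePreserving (fun x => update x i (x i + g x)) volume volume := by
  let e := MeasurableEquiv.piEquivPiSubtypeProd (fun _ : ι => ℝ) (· ≠ i)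
  have he : MeasurePreserving e volume volume :=
    volume_preserving_piEquivPiSubtypeProd (fun _ : ι => ℝ) (· ≠ i)
  let G : ({j // j ≠ i} → ℝ) → ℝ := fun a => g (e.symm (a, 0))
  have hG : Measurable G := hg.comp (e.symm.measurable.comp measurable_prodMk_right)
  have hconj : (fun x => update x i (x i + g x)) =
      e.symm ∘ (fun p => (p.1, p.2 + fun _ => G p.1)) ∘ e := by
    funext x j
    by_cases hj : j = i
    · subst hj
      have hgx : g x = G (e x).1 := hg_indep _ _ fun k hk => by simp [e, hk]
      simp [e, hgx]
    · simp [e, hj]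
  rw [hconj]
  exact (he.symm e).comp
    ((measurePreserving_prod_add_snd _ _ (measurable_pi_lambda _ fun _ => hG)).comp he)

theorem List.foldl_comp_induction {ι α : Type*} {P : (α → α) → Prop}
    (hcomp : ∀ f g, P f → P g → P (f ∘ g)) (f : ι → α → α) (hf : ∀ i, P (f i))
    (l : List ι) {F : α → α} (hF : P F) : P (l.foldl (fun F i => f i ∘ F) F) := by
  induction l generalizing F with
  | nil => exact hF
  | cons i l ih => exact ih (hcomp _ _ (hf i) hF)

section SchemeStep

variable {d : ℕ} (Δt : ℝ) (v : Fin d → (Fin d → ℝ) → ℝ) (i : Fin d)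

theorem schemeStep_neg_schemeStep
    (hv : ∀ x y : Fin d → ℝ, (∀ j, j ≠ i → x j = y j) → v i x = v i y) (x : Fin d → ℝ) :
    schemeStep (-Δt) v i (schemeStep Δt v i x) = x := by
  have hvx : v i (schemeStep Δt v i x) = v i x :=
    hv _ _ fun j hj => update_of_ne hj _ _
  funext j
  by_cases hj : j = i
  · subst hj
    simp only [schemeStep, update_self] at hvx ⊢
    rw [hvx]
    ring
  · simp [schemeStep, hj]

theorem schemeStep_bijective
    (hv : ∀ x y : Fin d → ℝ, (∀ j, j ≠ i → x j = y j) → v i x = v i y) :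
    Bijective (schemeStep Δt v i) := by
  refine bijective_iff_has_inverse.2 ⟨schemeStep (-Δt) v i, schemeStep_neg_schemeStep Δt v i hv,
    fun x => ?_⟩
  simpa using schemeStep_neg_schemeStep (-Δt) v i hv x

theorem schemeStep_measurePreserving (hv_cont : Continuous (v i))
    (hv : ∀ x y : Fin d → ℝ, (∀ j, j ≠ i → x j = y j) → v i x = v i y) :
    MeasurePreserving (schemeStep Δt v i) volume volume :=
  measurePreserving_update_add i (hv_cont.measurable.const_mul Δt)
    fun x y hxy => by rw [hv x y hxy]

end SchemeStep

theorem stmt_7_general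
    (d : ℕ) (Δt : ℝ)
    (v : Fin d → (Fin d → ℝ) → ℝ)
    (hv_cont : ∀ i, Continuous (v i))
    (hv_indep : ∀ (i : Fin d) (x y : Fin d → ℝ),
      (∀ j : Fin d, j ≠ i → x j = y j) → v i x = v i y) :
    Function.Bijective (schemeMap Δt v) ∧
    ∀ A : Set (Fin d → ℝ), MeasurableSet A →
      volume (schemeMap Δt v ⁻¹' A) = volume A := by
  obtain ⟨hbij, hmp⟩ := (List.finRange d).foldl_comp_induction
    (P := fun F => Bijective F ∧ MeasurePreserving F volume volume)
    (fun _ _ hf hg => ⟨hf.1.comp hg.1, hf.2.comp hg.2⟩) (schemeStep Δt v)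
    (fun i => ⟨schemeStep_bijective Δt v i (hv_indep i),
      schemeStep_measurePreserving Δt v i (hv_cont i) (hv_indep i)⟩)
    ⟨bijective_id, .id volume⟩
  exact ⟨hbij, fun A hA => hmp.measure_preimage hA.nullMeasurableSet⟩

/-- if each component `v i` of the velocity field does not depend on the
`i`-th coordinate, then the deterministic part of the volume-preserving splitting scheme is
a bijection of `ℝ^d` preserving `d`-dimensional Lebesgue measure. -/
theorem stmt_7
    (d : ℕ) (hd : 2 ≤ d) (Δt : ℝ) (hΔt : 0 < Δt)
    (v : Fin d → (Fin d → ℝ) → ℝ)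
    (hv_cont : ∀ i, Continuous (v i))
    (hv_indep : ∀ (i : Fin d) (x y : Fin d → ℝ),
      (∀ j : Fin d, j ≠ i → x j = y j) → v i x = v i y) :
    Function.Bijective (schemeMap Δt v) ∧
    ∀ A : Set (Fin d → ℝ), MeasurableSet A →
      volume (schemeMap Δt v ⁻¹' A) = volume A :=
  stmt_7_general d Δt v hv_cont hv_indep
end

section
/- Assume (i) there exist C ≥ 0 and ρ > 0 such that sup_{(τ,x)} |(Iⁿ g)(τ,x)| ≤ C e^{−ρn} for all integers n ≥ 0, where g(τ,x) := v₁(τ + q(Δt/2), x₂); and (ii) for every bounded measurable φ : 𝕋 × 𝕋² → ℝ with ∫_{𝕋²} φ(τ,x) dx = 0 for every τ, one has sup_{(τ,x)} |(Iⁿφ)(τ,x)| → 0 as n → ∞. Then the series v̂ := Δt Σ_{n=0}^∞ Iⁿ g converges uniformly to a bounded measurable function on 𝕋 × 𝕋² satisfying the discrete cell problem v̂(τ,x) = (I v̂)(τ,x) + Δt·v₁(τ + q(Δt/2), x₂) for all (τ,x), with ∫_{𝕋²} v̂(τ,x) dx = 0 for every τ; moreover v̂ is the unique bounded measurable function with zero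 spatial mean for every τ that satisfies this equation. -/
open MeasureTheory ProbabilityTheory Filter

/-!
The terms of the series decay exponentially, so it converges uniformly to a bounded measurable
function. Since `I` integrates against a probability measure it commutes with the sum, and
splitting off the term `n = 0` gives the cell equation. Both half-steps of `Φ_τ` are shears of
the torus and the noise is a translation, so they preserve Haar measure and `I` carries the
spatial mean at time `τ + Δt` back to time `τ`; hence every `Iⁿ g` has zero mean because `v₁`
does. The difference of two solutions is a bounded fixed point of `I` with zero mean, which
mixing forces to vanish.
-/

open Function

local notation "𝕋" => UnitAddCircle

section BoundedSeries

variable {X : Type*} {f : ℕ → X → ℝ} {u : ℕ → ℝ}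

theorem integrable_of_abs_le_s9 [MeasurableSpace X] {μ : Measure X} [IsFiniteMeasure μ]
    {φ : X → ℝ} (hφ : Measurable φ) {M : ℝ} (hM : ∀ x, |φ x| ≤ M) : Integrable φ μ :=
  .of_bound hφ.aestronglyMeasurable M (ae_of_all _ hM)

theorem integral_tsum_of_abs_le [MeasurableSpace X] {μ : Measure X} [IsFiniteMeasure μ]
    (hf : ∀ n, Measurable (f n)) (hu : Summable u) (hfu : ∀ n x, |f n x| ≤ u n) :
    ∫ x, ∑' n, f n x ∂μ = ∑' n, ∫ x, f n x ∂μ := by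
  have hbound : ∀ n, ∫ x, ‖f n x‖ ∂μ ≤ μ.real Set.univ * u n := fun n => by
    simpa using integral_mono (integrable_of_abs_le_s9 (hf n) (hfu n)).norm
      (integrable_const (u n)) (hfu n)
  refine (integral_tsum_of_summable_integral_norm (fun n => integrable_of_abs_le_s9 (hf n) (hfu n))
    ?_).symm
  exact (hu.mul_left _).of_nonneg_of_le (fun n => integral_nonneg fun _ => norm_nonneg _) hbound

theorem tendstoUniformly_const_mul_sum_range (hu : Summable u) (hfu : ∀ n x, |f n x| ≤ u n)
    (c : ℝ) :
    TendstoUniformly (fun n x => c * ∑ i ∈ Finset.range n, f i x)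
      (fun x => c * ∑' n, f n x) atTop := by
  have h := tendstoUniformly_tsum_nat (hu.mul_left |c|) (f := fun n x => c * f n x)
    fun n x => by
      rw [Real.norm_eq_abs, abs_mul]
      exact mul_le_mul_of_nonneg_left (hfu n x) (abs_nonneg c)
  simpa only [Finset.mul_sum, tsum_mul_left] using h

theorem abs_const_mul_tsum_le (hu : Summable u) (hfu : ∀ n x, |f n x| ≤ u n) (c : ℝ) (x : X) :
    |c * ∑' n, f n x| ≤ |c| * ∑' n, u n := by
  rw [abs_mul]
  exact mul_le_mul_of_nonneg_left
    (tsum_of_norm_bounded (f := fun n => f n x) hu.hasSum fun n => hfu n x) (abs_nonneg c)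

theorem integral_const_mul_tsum_eq_zero [MeasurableSpace X] {μ : Measure X} [IsFiniteMeasure μ]
    (hf : ∀ n, Measurable (f n)) (hu : Summable u) (hfu : ∀ n x, |f n x| ≤ u n)
    (hf0 : ∀ n, ∫ x, f n x ∂μ = 0) (c : ℝ) : ∫ x, c * ∑' n, f n x ∂μ = 0 := by
  rw [integral_const_mul, integral_tsum_of_abs_le hf hu hfu]
  simp [hf0]

end BoundedSeries

section IntegralOperator

variable {X Ξ : Type*} [MeasurableSpace X] [MeasurableSpace Ξ] {γ : Measure Ξ}
  {K : X → Ξ → X} {I : (X → ℝ) → X → ℝ}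

theorem measurable_iterate_of_eq_integral [SFinite γ]
    (hI : ∀ φ z, I φ z = ∫ ξ, φ (K z ξ) ∂γ) (hK : Measurable (uncurry K))
    {f : X → ℝ} (hf : Measurable f) (n : ℕ) : Measurable (I^[n] f) := by
  induction n with
  | zero => exact hf
  | succ n ih =>
    rw [iterate_succ_apply', show I (I^[n] f) = fun z => ∫ ξ, (I^[n] f) (K z ξ) ∂γ from
      funext (hI _)]
    exact (ih.comp hK).stronglyMeasurable.integral_prod_right'.measurable

theorem map_sub_of_eq_integral [IsFiniteMeasure γ]
    (hI : ∀ φ z, I φ z = ∫ ξ, φ (K z ξ) ∂γ) (hK : Measurable (uncurry K))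
    {φ ψ : X → ℝ} (hφ : Measurable φ) (hψ : Measurable ψ) {M N : ℝ}
    (hφM : ∀ z, |φ z| ≤ M) (hψN : ∀ z, |ψ z| ≤ N) : I (φ - ψ) = I φ - I ψ := by
  funext z
  have hKz : Measurable (K z) := hK.comp measurable_prodMk_left
  rw [Pi.sub_apply, hI, hI, hI]
  exact integral_sub (integrable_of_abs_le_s9 (hφ.comp hKz) fun ξ => hφM (K z ξ))
    (integrable_of_abs_le_s9 (hψ.comp hKz) fun ξ => hψN (K z ξ))

theorem const_mul_tsum_iterate_eq [IsFiniteMeasure γ]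
    (hI : ∀ φ z, I φ z = ∫ ξ, φ (K z ξ) ∂γ) (hK : Measurable (uncurry K))
    {f : X → ℝ} (hf : Measurable f) {u : ℕ → ℝ} (hu : Summable u)
    (hfu : ∀ n z, |(I^[n] f) z| ≤ u n) (c : ℝ) (z : X) :
    c * ∑' n, (I^[n] f) z = I (fun y => c * ∑' n, (I^[n] f) y) z + c * f z := by
  have hKz : Measurable (K z) := hK.comp measurable_prodMk_left
  have hstep : I (fun y => c * ∑' n, (I^[n] f) y) z = c * ∑' n, (I^[n + 1] f) z := by
    rw [hI, integral_const_mul, integral_tsum_of_abs_le (f := fun n ξ => (I^[n] f) (K z ξ))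
      (fun n => (measurable_iterate_of_eq_integral hI hK hf n).comp hKz) hu fun n ξ => hfu n _]
    simp only [iterate_succ_apply', hI]
  have hsum : Summable fun n => (I^[n] f) z := .of_norm_bounded hu fun n => hfu n z
  rw [hstep, hsum.tsum_eq_zero_add, iterate_zero_apply]
  ring

end IntegralOperator

theorem eq_zero_of_isFixedPt_of_tendsto_iSup {X : Type*} {I : (X → ℝ) → X → ℝ} {u : X → ℝ}
    (hu : IsFixedPt I u) {M : ℝ} (huM : ∀ z, |u z| ≤ M)
    (h : Tendsto (fun n => ⨆ z, |(I^[n] u) z|) atTop (nhds 0)) : u = 0 := by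
  simp only [(hu.iterate _).eq] at h
  have h0 : ⨆ z, |u z| = 0 := tendsto_nhds_unique tendsto_const_nhds h
  funext z
  exact abs_nonpos_iff.1 (h0 ▸ le_ciSup ⟨M, by rintro _ ⟨y, rfl⟩; exact huM y⟩ z)

theorem eq_of_eq_apply_add_of_mixing {T Y Ξ : Type*} [MeasurableSpace T] [MeasurableSpace Y]
    [MeasurableSpace Ξ] {ν : Measure Y} [IsFiniteMeasure ν] {γ : Measure Ξ} [IsFiniteMeasure γ]
    {K : T × Y → Ξ → T × Y} {I : (T × Y → ℝ) → T × Y → ℝ}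
    (hI : ∀ φ z, I φ z = ∫ ξ, φ (K z ξ) ∂γ) (hK : Measurable (uncurry K))
    (hmix : ∀ φ : T × Y → ℝ, Measurable φ → (∃ M : ℝ, ∀ z, |φ z| ≤ M) →
      (∀ τ, ∫ y, φ (τ, y) ∂ν = 0) → Tendsto (fun n : ℕ => ⨆ z, |(I^[n] φ) z|) atTop (nhds 0))
    {h v w : T × Y → ℝ} (hv : Measurable v) (hw : Measurable w) {M N : ℝ}
    (hvM : ∀ z, |v z| ≤ M) (hwN : ∀ z, |w z| ≤ N)
    (hv0 : ∀ τ, ∫ y, v (τ, y) ∂ν = 0) (hw0 : ∀ τ, ∫ y, w (τ, y) ∂ν = 0)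
    (hveq : ∀ z, v z = I v z + h z) (hweq : ∀ z, w z = I w z + h z) : w = v := by
  have hfix : IsFixedPt I (w - v) := by
    rw [IsFixedPt, map_sub_of_eq_integral hI hK hw hv hwN hvM]
    funext z
    simp only [Pi.sub_apply]
    linarith [hweq z, hveq z]
  have hbound : ∀ z, |(w - v) z| ≤ N + M :=
    fun z => (abs_sub _ _).trans (add_le_add (hwN z) (hvM z))
  have hmean : ∀ τ, ∫ y, (w - v) (τ, y) ∂ν = 0 := fun τ => by
    simp only [Pi.sub_apply]
    rw [integral_sub
      (integrable_of_abs_le_s9 (φ := fun y => w (τ, y)) (hw.comp measurable_prodMk_left)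
        fun _ => hwN _)
      (integrable_of_abs_le_s9 (φ := fun y => v (τ, y)) (hv.comp measurable_prodMk_left)
        fun _ => hvM _), hw0, hv0, sub_zero]
  exact sub_eq_zero.1 (eq_zero_of_isFixedPt_of_tendsto_iSup hfix hbound
    (hmix _ (hw.sub hv) ⟨_, hbound⟩ hmean))

section SpatialMean

variable {T Y Ξ : Type*} [MeasurableSpace T] [MeasurableSpace Y] [MeasurableSpace Ξ]
  {ν : Measure Y} [IsFiniteMeasure ν] {γ : Measure Ξ} [IsProbabilityMeasure γ]

theorem integral_integral_comp_of_measurePreserving {Ψ : Ξ → Y → Y}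
    (hΨ : Measurable (uncurry Ψ)) (hΨν : ∀ ξ, MeasurePreserving (Ψ ξ) ν ν)
    {φ : Y → ℝ} (hφ : Measurable φ) {M : ℝ} (hφM : ∀ y, |φ y| ≤ M) :
    ∫ y, ∫ ξ, φ (Ψ ξ y) ∂γ ∂ν = ∫ y, φ y ∂ν := by
  have hint : Integrable (uncurry fun y ξ => φ (Ψ ξ y)) (ν.prod γ) :=
    integrable_of_abs_le_s9 (hφ.comp (hΨ.comp measurable_swap)) fun _ => hφM _
  have hslice : ∀ ξ, ∫ y, φ (Ψ ξ y) ∂ν = ∫ y, φ y ∂ν := fun ξ => by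
    rw [← integral_map (hΨν ξ).aemeasurable hφ.aestronglyMeasurable, (hΨν ξ).map_eq]
  simp only [integral_integral_swap hint, hslice, integral_const, probReal_univ, one_smul]

theorem integral_iterate_eq_zero {I : (T × Y → ℝ) → T × Y → ℝ} {θ : T → T}
    {Ψ : T → Ξ → Y → Y} (hI : ∀ φ τ y, I φ (τ, y) = ∫ ξ, φ (θ τ, Ψ τ ξ y) ∂γ)
    (hΨ : ∀ τ, Measurable (uncurry (Ψ τ))) (hΨν : ∀ τ ξ, MeasurePreserving (Ψ τ ξ) ν ν)
    {f : T × Y → ℝ} (hf : ∀ n, Measurable (I^[n] f)) {u : ℕ → ℝ}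
    (hfu : ∀ n z, |(I^[n] f) z| ≤ u n) (hf0 : ∀ τ, ∫ y, f (τ, y) ∂ν = 0) (n : ℕ) (τ : T) :
    ∫ y, (I^[n] f) (τ, y) ∂ν = 0 := by
  induction n generalizing τ with
  | zero => exact hf0 τ
  | succ n ih =>
    simp only [iterate_succ_apply', hI]
    rw [integral_integral_comp_of_measurePreserving (φ := fun y => (I^[n] f) (θ τ, y)) (hΨ τ)
      (hΨν τ) ((hf n).comp measurable_prodMk_left) fun y => hfu n _]
    exact ih (θ τ)

end SpatialMean

theorem exists_unique_cell_solution {T Y Ξ : Type*} [MeasurableSpace T] [MeasurableSpace Y]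
    [MeasurableSpace Ξ] {ν : Measure Y} [IsFiniteMeasure ν] {γ : Measure Ξ}
    [IsProbabilityMeasure γ] {I : (T × Y → ℝ) → T × Y → ℝ} {θ : T → T} {Ψ : T → Ξ → Y → Y}
    (hI : ∀ φ τ y, I φ (τ, y) = ∫ ξ, φ (θ τ, Ψ τ ξ y) ∂γ)
    (hK : Measurable fun p : (T × Y) × Ξ => (θ p.1.1, Ψ p.1.1 p.2 p.1.2))
    (hΨν : ∀ τ ξ, MeasurePreserving (Ψ τ ξ) ν ν)
    (hmix : ∀ φ : T × Y → ℝ, Measurable φ → (∃ M : ℝ, ∀ z, |φ z| ≤ M) →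
      (∀ τ, ∫ y, φ (τ, y) ∂ν = 0) → Tendsto (fun n : ℕ => ⨆ z, |(I^[n] φ) z|) atTop (nhds 0))
    {f : T × Y → ℝ} (hf : Measurable f) (hf0 : ∀ τ, ∫ y, f (τ, y) ∂ν = 0) {u : ℕ → ℝ}
    (hu : Summable u) (hfu : ∀ n z, |(I^[n] f) z| ≤ u n) (c : ℝ) :
    ∃ v : T × Y → ℝ,
      (∀ z, v z = c * ∑' n, (I^[n] f) z) ∧
      TendstoUniformly (fun n z => c * ∑ i ∈ Finset.range n, (I^[i] f) z) v atTop ∧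
      Measurable v ∧ (∃ M : ℝ, ∀ z, |v z| ≤ M) ∧
      (∀ z, v z = I v z + c * f z) ∧
      (∀ τ, ∫ y, v (τ, y) ∂ν = 0) ∧
      (∀ w : T × Y → ℝ, Measurable w → (∃ M : ℝ, ∀ z, |w z| ≤ M) →
        (∀ τ, ∫ y, w (τ, y) ∂ν = 0) → (∀ z, w z = I w z + c * f z) → w = v) := by
  have hIK : ∀ φ z, I φ z = ∫ ξ, φ (θ z.1, Ψ z.1 ξ z.2) ∂γ := fun φ z => hI φ z.1 z.2
  have hiter : ∀ n, Measurable (I^[n] f) := measurable_iterate_of_eq_integral hIK hK hf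
  have hmean : ∀ n τ, ∫ y, (I^[n] f) (τ, y) ∂ν = 0 :=
    integral_iterate_eq_zero hI (fun τ => (hK.comp
      (((measurable_const (a := τ)).prodMk measurable_snd).prodMk measurable_fst)).snd)
      hΨν hiter hfu hf0
  set v := fun z => c * ∑' n, (I^[n] f) z
  have hvbound : ∀ z, |v z| ≤ |c| * ∑' n, u n := abs_const_mul_tsum_le hu hfu c
  have hvm : Measurable v := (Measurable.tsum hiter).const_mul c
  have hvfix : ∀ z, v z = I v z + c * f z := const_mul_tsum_iterate_eq hIK hK hf hu hfu c
  have hvmean : ∀ τ, ∫ y, v (τ, y) ∂ν = 0 := fun τ =>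
    integral_const_mul_tsum_eq_zero (fun n => (hiter n).comp measurable_prodMk_left) hu
      (fun n _ => hfu n _) (fun n => hmean n τ) c
  refine ⟨v, fun z => rfl, tendstoUniformly_const_mul_sum_range hu hfu c, hvm, ⟨_, hvbound⟩,
    hvfix, hvmean, fun w hw ⟨M, hwM⟩ hw0 hweq => ?_⟩
  exact eq_of_eq_apply_add_of_mixing hIK hK hmix hvm hw hvbound hwM hvmean hw0 hvfix hweq

section Shear

variable {G H : Type*} [MeasurableSpace G] [MeasurableSpace H] {μ : Measure G} {ν : Measure H}
  [SFinite μ] [SFinite ν]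

theorem measurePreserving_shear_snd [Add H] [MeasurableAdd₂ H] [ν.IsAddRightInvariant]
    {h : G → H} (hh : Measurable h) :
    MeasurePreserving (fun p : G × H => (p.1, p.2 + h p.1)) (μ.prod ν) (μ.prod ν) :=
  (MeasurePreserving.id μ).skew_product (g := fun a c => c + h a)
    (measurable_snd.add (hh.comp measurable_fst))
    (ae_of_all _ fun a => map_add_right_eq_self ν (h a))

theorem measurePreserving_shear_fst [Add G] [MeasurableAdd₂ G] [μ.IsAddRightInvariant]
    {f : H → G} (hf : Measurable f) :
    MeasurePreserving (fun p : G × H => (p.1 + f p.2, p.2)) (μ.prod ν) (μ.prod ν) :=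
  (Measure.measurePreserving_swap.comp (measurePreserving_shear_snd hf)).comp
    Measure.measurePreserving_swap

theorem measurePreserving_shear_fst_snd [Add G] [MeasurableAdd₂ G] [μ.IsAddRightInvariant]
    [Add H] [MeasurableAdd₂ H] [ν.IsAddRightInvariant] {f : H → G} {h : G → H} (hf : Measurable f)
    (hh : Measurable h) :
    MeasurePreserving (fun p : G × H => (p.1 + f p.2, p.2 + h (p.1 + f p.2)))
      (μ.prod ν) (μ.prod ν) :=
  (measurePreserving_shear_snd hh).comp (measurePreserving_shear_fst hf)

end Shear

section SplittingScheme

/-- The map `Φ_τ`: a shear in `x₁` followed by a shear in `x₂`. -/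
noncomputable def splitStep (Δt : ℝ) (v₁ v₂ : 𝕋 × 𝕋 → ℝ) (τ : 𝕋) (x : 𝕋 × 𝕋) : 𝕋 × 𝕋 :=
  (x.1 + (↑(Δt * v₁ (τ + (↑(Δt / 2) : 𝕋), x.2)) : 𝕋),
   x.2 + (↑(Δt * v₂ (τ + (↑(Δt / 2) : 𝕋), x.1 + (↑(Δt * v₁ (τ + (↑(Δt / 2) : 𝕋), x.2)) : 𝕋)))
     : 𝕋))

variable {Δt : ℝ} {v₁ v₂ : 𝕋 × 𝕋 → ℝ}

@[fun_prop]
theorem continuous_uncurry_splitStep (h₁ : Continuous v₁) (h₂ : Continuous v₂) :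
    Continuous (uncurry (splitStep Δt v₁ v₂)) := by
  unfold splitStep
  fun_prop

theorem measurePreserving_splitStep (h₁ : Continuous v₁) (h₂ : Continuous v₂) (τ : 𝕋) :
    MeasurePreserving (splitStep Δt v₁ v₂ τ) volume volume := by
  exact measurePreserving_shear_fst_snd (μ := volume) (ν := volume)
    (by fun_prop : Continuous fun x₂ : 𝕋 => (↑(Δt * v₁ (τ + (↑(Δt / 2) : 𝕋), x₂)) : 𝕋)).measurable
    (by fun_prop : Continuous fun x₁ : 𝕋 => (↑(Δt * v₂ (τ + (↑(Δt / 2) : 𝕋), x₁)) : 𝕋)).measurable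

theorem measurePreserving_splitStep_add (h₁ : Continuous v₁) (h₂ : Continuous v₂) (τ : 𝕋)
    (c : 𝕋 × 𝕋) : MeasurePreserving (fun x => splitStep Δt v₁ v₂ τ x + c) volume volume :=
  (measurePreserving_add_right (volume.prod volume) c).comp (measurePreserving_splitStep h₁ h₂ τ)

end SplittingScheme

theorem stmt_9_general
    (Δt : ℝ) (σ : ℝ)
    (v₁ v₂ : UnitAddCircle × UnitAddCircle → ℝ)
    (hv₁_cont : Continuous v₁) (hv₂_cont : Continuous v₂)
    (hv₁_mean : ∀ τ : UnitAddCircle, ∫ x₂ : UnitAddCircle, v₁ (τ, x₂) = 0)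
    (Φ : UnitAddCircle → UnitAddCircle × UnitAddCircle → UnitAddCircle × UnitAddCircle)
    (hΦ : ∀ (τ : UnitAddCircle) (x : UnitAddCircle × UnitAddCircle), Φ τ x =
      (x.1 + (↑(Δt * v₁ (τ + (↑(Δt / 2) : UnitAddCircle), x.2)) : UnitAddCircle),
       x.2 + (↑(Δt * v₂ (τ + (↑(Δt / 2) : UnitAddCircle),
         x.1 + (↑(Δt * v₁ (τ + (↑(Δt / 2) : UnitAddCircle), x.2)) : UnitAddCircle)))
           : UnitAddCircle)))
    (I : (UnitAddCircle × (UnitAddCircle × UnitAddCircle) → ℝ) →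
         (UnitAddCircle × (UnitAddCircle × UnitAddCircle) → ℝ))
    (hI : ∀ (φ : UnitAddCircle × (UnitAddCircle × UnitAddCircle) → ℝ)
        (τ : UnitAddCircle) (x : UnitAddCircle × UnitAddCircle),
      I φ (τ, x) = ∫ ξ : ℝ × ℝ,
        φ (τ + (↑Δt : UnitAddCircle),
          ((Φ τ x).1 + (↑(σ * Real.sqrt Δt * ξ.1) : UnitAddCircle),
           (Φ τ x).2 + (↑(σ * Real.sqrt Δt * ξ.2) : UnitAddCircle)))
        ∂((gaussianReal 0 1).prod (gaussianReal 0 1)))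
    (g : UnitAddCircle × (UnitAddCircle × UnitAddCircle) → ℝ)
    (hg : ∀ (τ : UnitAddCircle) (x : UnitAddCircle × UnitAddCircle),
      g (τ, x) = v₁ (τ + (↑(Δt / 2) : UnitAddCircle), x.2))
    (C ρ : ℝ) (hρ : 0 < ρ)
    (hdecay : ∀ (n : ℕ) (z : UnitAddCircle × (UnitAddCircle × UnitAddCircle)),
      |(I^[n] g) z| ≤ C * Real.exp (-ρ * n))
    (hmix : ∀ φ : UnitAddCircle × (UnitAddCircle × UnitAddCircle) → ℝ,
      Measurable φ → (∃ M : ℝ, ∀ z, |φ z| ≤ M) →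
      (∀ τ : UnitAddCircle, ∫ x : UnitAddCircle × UnitAddCircle, φ (τ, x) = 0) →
      Tendsto (fun n : ℕ => ⨆ z, |(I^[n] φ) z|) atTop (nhds 0)) :
    ∃ vhat : UnitAddCircle × (UnitAddCircle × UnitAddCircle) → ℝ,
      (∀ z, vhat z = Δt * ∑' n : ℕ, (I^[n] g) z) ∧
      TendstoUniformly
        (fun (n : ℕ) (z : UnitAddCircle × (UnitAddCircle × UnitAddCircle)) =>
          Δt * ∑ i ∈ Finset.range n, (I^[i] g) z) vhat atTop ∧
      Measurable vhat ∧ (∃ M : ℝ, ∀ z, |vhat z| ≤ M) ∧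
      (∀ z, vhat z = I vhat z + Δt * g z) ∧
      (∀ τ : UnitAddCircle, ∫ x : UnitAddCircle × UnitAddCircle, vhat (τ, x) = 0) ∧
      (∀ w : UnitAddCircle × (UnitAddCircle × UnitAddCircle) → ℝ,
        Measurable w → (∃ M : ℝ, ∀ z, |w z| ≤ M) →
        (∀ τ : UnitAddCircle, ∫ x : UnitAddCircle × UnitAddCircle, w (τ, x) = 0) →
        (∀ z, w z = I w z + Δt * g z) → w = vhat) := by
  obtain rfl : Φ = splitStep Δt v₁ v₂ := funext fun τ => funext (hΦ τ)
  have hg' : g = fun z => v₁ (z.1 + (↑(Δt / 2) : 𝕋), z.2.2) := funext fun z => hg z.1 z.2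
  set noise : ℝ × ℝ → 𝕋 × 𝕋 := fun ξ => (↑(σ * √Δt * ξ.1), ↑(σ * √Δt * ξ.2))
  have hgm : Measurable g := hg' ▸ Continuous.measurable (by fun_prop)
  have hg0 : ∀ τ, ∫ x, g (τ, x) = 0 := fun τ => by
    simp only [hg]
    exact (integral_fun_snd (μ := volume) (ν := volume)
      fun y => v₁ (τ + (↑(Δt / 2) : 𝕋), y)).trans (by rw [hv₁_mean, smul_zero])
  have hu : Summable fun n : ℕ => C * Real.exp (-ρ * n) := by
    simpa only [mul_comm (-ρ)] using
      (Real.summable_exp_nat_mul_iff.2 (neg_lt_zero.2 hρ)).mul_left C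
  exact exists_unique_cell_solution (θ := fun τ : 𝕋 => τ + (↑Δt : 𝕋))
    (Ψ := fun τ ξ x => splitStep Δt v₁ v₂ τ x + noise ξ) hI
    (Continuous.measurable (by fun_prop))
    (fun τ ξ => measurePreserving_splitStep_add hv₁_cont hv₂_cont τ (noise ξ)) hmix hgm hg0 hu
    hdecay Δt

/-- existence, uniqueness and uniform convergence for the discrete-type
cell problem `v̂ = I v̂ + Δt·v₁(τ + Δt/2, x₂)` associated with the one-step flow operator
`I` of the stochastic structure-preserving scheme on the space-time torus `𝕋 × 𝕋²`,
assuming the exponential decay of `Iⁿ g` (where `g(τ,x) = v₁(τ + Δt/2, x₂)`) and the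
uniform mixing of `Iⁿ` on bounded measurable functions with zero spatial mean. -/
theorem stmt_9
    (N : ℕ) (hN : 0 < N) (Δt : ℝ) (hΔt : Δt = 1 / (N : ℝ)) (σ : ℝ) (hσ : 0 < σ)
    (v₁ v₂ : UnitAddCircle × UnitAddCircle → ℝ)
    (hv₁_cont : Continuous v₁) (hv₂_cont : Continuous v₂)
    (hv₁_mean : ∀ τ : UnitAddCircle, ∫ x₂ : UnitAddCircle, v₁ (τ, x₂) = 0)
    (Φ : UnitAddCircle → UnitAddCircle × UnitAddCircle → UnitAddCircle × UnitAddCircle)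
    (hΦ : ∀ (τ : UnitAddCircle) (x : UnitAddCircle × UnitAddCircle), Φ τ x =
      (x.1 + (↑(Δt * v₁ (τ + (↑(Δt / 2) : UnitAddCircle), x.2)) : UnitAddCircle),
       x.2 + (↑(Δt * v₂ (τ + (↑(Δt / 2) : UnitAddCircle),
         x.1 + (↑(Δt * v₁ (τ + (↑(Δt / 2) : UnitAddCircle), x.2)) : UnitAddCircle)))
           : UnitAddCircle)))
    (I : (UnitAddCircle × (UnitAddCircle × UnitAddCircle) → ℝ) →
         (UnitAddCircle × (UnitAddCircle × UnitAddCircle) → ℝ))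
    (hI : ∀ (φ : UnitAddCircle × (UnitAddCircle × UnitAddCircle) → ℝ)
        (τ : UnitAddCircle) (x : UnitAddCircle × UnitAddCircle),
      I φ (τ, x) = ∫ ξ : ℝ × ℝ,
        φ (τ + (↑Δt : UnitAddCircle),
          ((Φ τ x).1 + (↑(σ * Real.sqrt Δt * ξ.1) : UnitAddCircle),
           (Φ τ x).2 + (↑(σ * Real.sqrt Δt * ξ.2) : UnitAddCircle)))
        ∂((gaussianReal 0 1).prod (gaussianReal 0 1)))
    (g : UnitAddCircle × (UnitAddCircle × UnitAddCircle) → ℝ)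
    (hg : ∀ (τ : UnitAddCircle) (x : UnitAddCircle × UnitAddCircle),
      g (τ, x) = v₁ (τ + (↑(Δt / 2) : UnitAddCircle), x.2))
    (C ρ : ℝ) (hC : 0 ≤ C) (hρ : 0 < ρ)
    (hdecay : ∀ (n : ℕ) (z : UnitAddCircle × (UnitAddCircle × UnitAddCircle)),
      |(I^[n] g) z| ≤ C * Real.exp (-ρ * n))
    (hmix : ∀ φ : UnitAddCircle × (UnitAddCircle × UnitAddCircle) → ℝ,
      Measurable φ → (∃ M : ℝ, ∀ z, |φ z| ≤ M) →
      (∀ τ : UnitAddCircle, ∫ x : UnitAddCircle × UnitAddCircle, φ (τ, x) = 0) →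
      Tendsto (fun n : ℕ => ⨆ z, |(I^[n] φ) z|) atTop (nhds 0)) :
    ∃ vhat : UnitAddCircle × (UnitAddCircle × UnitAddCircle) → ℝ,
      (∀ z, vhat z = Δt * ∑' n : ℕ, (I^[n] g) z) ∧
      TendstoUniformly
        (fun (n : ℕ) (z : UnitAddCircle × (UnitAddCircle × UnitAddCircle)) =>
          Δt * ∑ i ∈ Finset.range n, (I^[i] g) z) vhat atTop ∧
      Measurable vhat ∧ (∃ M : ℝ, ∀ z, |vhat z| ≤ M) ∧
      (∀ z, vhat z = I vhat z + Δt * g z) ∧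
      (∀ τ : UnitAddCircle, ∫ x : UnitAddCircle × UnitAddCircle, vhat (τ, x) = 0) ∧
      (∀ w : UnitAddCircle × (UnitAddCircle × UnitAddCircle) → ℝ,
        Measurable w → (∃ M : ℝ, ∀ z, |w z| ≤ M) →
        (∀ τ : UnitAddCircle, ∫ x : UnitAddCircle × UnitAddCircle, w (τ, x) = 0) →
        (∀ z, w z = I w z + Δt * g z) → w = vhat) :=
  stmt_9_general Δt σ v₁ v₂ hv₁_cont hv₂_cont hv₁_mean Φ hΦ I hI g hg C ρ hρ hdecay hmix
end

section
/- Assume there exists a discrete corrector v̂₁ for v₁, i.e., a bounded measurable function v̂₁ : ℝ × ℝ² → ℝ, 1-periodic in each argument, such that for every i ≥ 0, E[v̂₁(t_{i+1}, X^{i+1}) | 𝓕_i] = v̂₁(t_i, Xⁱ) − Δt·v₁(t_{i+1/2}, x₂ⁱ) almost surely. Then the second moment of the first component of the numerical solution grows at most linearly in the number of steps: sup_{n≥1} E[(x₁ⁿ)²]/n < ∞. -/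
open MeasureTheory ProbabilityTheory

/-!
With the corrector, `Mₙ = x₁ⁿ + v̂₁(tₙ, Xⁿ)` absorbs the drift of the first component: its
increment is `σ√Δt ξ₁ⁿ + Rₙ`, where `Rₙ = v̂₁(t_{n+1}, X^{n+1}) - E[v̂₁(t_{n+1}, X^{n+1}) | 𝓕ₙ]`
is a bounded martingale difference. The Gaussian increment is independent of the past, and `Rₙ`
has conditional mean zero, so both are orthogonal to `Mₙ` in `L²`. Hence `E[Mₙ²]` grows by at
most a fixed constant per step, and since `x₁ⁿ` differs from `Mₙ` by at most `sup |v̂₁|`, so does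
`E[(x₁ⁿ)²]` up to a factor two.
-/

namespace ProbabilityTheory.HasLaw

variable {Ω : Type*} {mΩ : MeasurableSpace Ω} {P : Measure Ω} {ξ : Ω → ℝ} {m : ℝ} {v : NNReal}

lemma memLp_of_gaussianReal (h : HasLaw ξ (gaussianReal m v) P) {p : ENNReal} (hp : p ≠ ⊤) :
    MemLp ξ p P := by
  have := (memLp_map_measure_iff aestronglyMeasurable_id h.aemeasurable).mp
    (h.map_eq ▸ memLp_id_gaussianReal' p hp)
  simpa using this

lemma integral_eq_of_gaussianReal (h : HasLaw ξ (gaussianReal m v) P) : ∫ ω, ξ ω ∂P = m :=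
  h.integral_eq.trans integral_id_gaussianReal

lemma integral_sq_of_gaussianReal (h : HasLaw ξ (gaussianReal 0 v) P) :
    ∫ ω, ξ ω ^ 2 ∂P = v := by
  rw [← variance_of_integral_eq_zero h.aemeasurable h.integral_eq_of_gaussianReal,
    h.variance_eq, variance_id_gaussianReal]

end ProbabilityTheory.HasLaw

lemma ProbabilityTheory.iIndepFun.indepFun_of_measurable_biSup {Ω ι β γ : Type*}
    {mΩ : MeasurableSpace Ω} [MeasurableSpace β] [MeasurableSpace γ] {μ : Measure Ω} {f : ι → Ω → β}
    (hf : ∀ i, Measurable (f i)) (h : iIndepFun f μ) {S : Set ι} {j : ι} (hj : j ∉ S)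
    {g : Ω → γ} (hg : Measurable[⨆ i ∈ S, MeasurableSpace.comap (f i) inferInstance] g) :
    IndepFun g (f j) μ := by
  have hind := indep_iSup_of_disjoint (fun i => (hf i).comap_le)
    ((iIndepFun_iff_iIndep _ _ _).mp h) (Set.disjoint_singleton_right.mpr hj)
  rw [IndepFun_iff_Indep]
  exact indep_of_indep_of_le_left (indep_of_indep_of_le_right hind
    (le_biSup (fun i => MeasurableSpace.comap (f i) inferInstance) (Set.mem_singleton j)))
    hg.comap_le

lemma measurable_of_step_recursion {Ω E β : Type*} [MeasurableSpace E] [MeasurableSpace β]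
    {G : ℕ → MeasurableSpace Ω} (hG : Monotone G) {X : ℕ → Ω → E} {η : ℕ → Ω → β}
    {Φ : ℕ → E → β → E} (hΦ : ∀ i, Measurable (Function.uncurry (Φ i)))
    (hX₀ : Measurable[G 0] (X 0)) (hη : ∀ i, Measurable[G (i + 1)] (η i))
    (hrec : ∀ i ω, X (i + 1) ω = Φ i (X i ω) (η i ω)) (n : ℕ) : Measurable[G n] (X n) := by
  induction n with
  | zero => exact hX₀
  | succ n ih =>
    rw [show X (n + 1) = Function.uncurry (Φ n) ∘ fun ω => (X n ω, η n ω) from funext (hrec n)]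
    exact (hΦ n).comp ((ih.mono (hG n.le_succ) le_rfl).prodMk (hη n))

-- `σ(ξ₁ⁱ, ξ₂ⁱ : i < n)`, with the noise indexed by `ℕ × Bool` as in the independence hypothesis.
abbrev pairNoiseSigma {Ω : Type*} (ξ₁ ξ₂ : ℕ → Ω → ℝ) (n : ℕ) : MeasurableSpace Ω :=
  ⨆ p ∈ {q : ℕ × Bool | q.1 < n},
    MeasurableSpace.comap (if p.2 then ξ₁ p.1 else ξ₂ p.1) inferInstance

lemma measurable_pairNoiseSigma_of_step_recursion {Ω E : Type*} [MeasurableSpace E]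
    {ξ₁ ξ₂ : ℕ → Ω → ℝ} {X : ℕ → Ω → E} {Φ : ℕ → E → ℝ × ℝ → E}
    (hΦ : ∀ i, Measurable (Function.uncurry (Φ i))) {x₀ : E} (hX₀ : ∀ ω, X 0 ω = x₀)
    (hrec : ∀ i ω, X (i + 1) ω = Φ i (X i ω) (ξ₁ i ω, ξ₂ i ω)) (n : ℕ) :
    Measurable[pairNoiseSigma ξ₁ ξ₂ n] (X n) := by
  have hξ : ∀ (p : ℕ × Bool) k, p.1 < k →
      Measurable[pairNoiseSigma ξ₁ ξ₂ k] (if p.2 then ξ₁ p.1 else ξ₂ p.1) := fun p k h =>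
    measurable_iff_comap_le.mpr (le_biSup (fun p : ℕ × Bool =>
      MeasurableSpace.comap (if p.2 then ξ₁ p.1 else ξ₂ p.1) inferInstance) h)
  exact measurable_of_step_recursion (G := pairNoiseSigma ξ₁ ξ₂)
    (fun k l h => biSup_mono fun p hp => hp.trans_le h) hΦ
    (by rw [funext hX₀]; exact measurable_const)
    (fun i => (hξ (i, true) _ i.lt_succ_self).prodMk (hξ (i, false) _ i.lt_succ_self)) hrec n

section Moments

variable {Ω : Type*} {mΩ : MeasurableSpace Ω} {μ : Measure Ω}

lemma memLp_of_increments {p : ENNReal} {M D : ℕ → Ω → ℝ} (hM₀ : MemLp (M 0) p μ)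
    (hD : ∀ n, MemLp (D n) p μ) (hMD : ∀ n ω, M (n + 1) ω = M n ω + D n ω) (n : ℕ) :
    MemLp (M n) p μ := by
  induction n with
  | zero => exact hM₀
  | succ n ih =>
    rw [show M (n + 1) = M n + D n from funext (hMD n)]
    exact ih.add (hD n)

lemma integral_sq_le_of_orthogonal_increments {M D : ℕ → Ω → ℝ} {C : ℝ}
    (hM : ∀ n, MemLp (M n) 2 μ) (hD : ∀ n, MemLp (D n) 2 μ)
    (hMD : ∀ n ω, M (n + 1) ω = M n ω + D n ω)
    (horth : ∀ n, ∫ ω, M n ω * D n ω ∂μ = 0) (hC : ∀ n, ∫ ω, D n ω ^ 2 ∂μ ≤ C) (n : ℕ) :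
    ∫ ω, M n ω ^ 2 ∂μ ≤ ∫ ω, M 0 ω ^ 2 ∂μ + n * C := by
  induction n with
  | zero => simp
  | succ n ih =>
    have hstep : ∫ ω, M (n + 1) ω ^ 2 ∂μ
        = ∫ ω, M n ω ^ 2 ∂μ + 2 * ∫ ω, M n ω * D n ω ∂μ + ∫ ω, D n ω ^ 2 ∂μ := by
      have hM2 : Integrable (fun ω => M n ω ^ 2) μ := (hM n).integrable_sq
      have hD2 : Integrable (fun ω => D n ω ^ 2) μ := (hD n).integrable_sq
      have hMD2 : Integrable (fun ω => 2 * (M n ω * D n ω)) μ :=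
        ((hM n).integrable_mul (hD n)).const_mul 2
      simp_rw [hMD n, add_sq, mul_assoc]
      have hsum : Integrable (fun ω => M n ω ^ 2 + 2 * (M n ω * D n ω)) μ := hM2.add hMD2
      rw [integral_add hsum hD2, integral_add hM2 hMD2, integral_const_mul]
    rw [hstep, horth n]
    push_cast
    linarith [hC n]

lemma integral_mul_eq_zero_of_condExp_eq_zero [IsFiniteMeasure μ] {m : MeasurableSpace Ω}
    (hm : m ≤ mΩ) {f g : Ω → ℝ} (hf : StronglyMeasurable[m] f) (hfg : Integrable (f * g) μ)
    (hg : Integrable g μ) (hg₀ : μ[g | m] =ᵐ[μ] 0) : ∫ ω, f ω * g ω ∂μ = 0 := by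
  have hfg₀ : μ[f * g | m] =ᵐ[μ] 0 := by
    filter_upwards [condExp_mul_of_stronglyMeasurable_left hf hfg hg, hg₀] with ω h h₀
    simp [h, h₀]
  calc ∫ ω, f ω * g ω ∂μ = ∫ ω, (μ[f * g | m]) ω ∂μ := (integral_condExp hm).symm
    _ = 0 := by simp [integral_congr_ae hfg₀]

lemma condExp_sub_ae_eq_zero_of_condExp_ae_eq [IsFiniteMeasure μ] {m : MeasurableSpace Ω}
    (hm : m ≤ mΩ) {f g : Ω → ℝ} (hf : Integrable f μ) (hg : StronglyMeasurable[m] g)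
    (h : μ[f | m] =ᵐ[μ] g) : μ[f - g | m] =ᵐ[μ] 0 := by
  have hgi : Integrable g μ := integrable_condExp.congr h
  filter_upwards [condExp_sub hf hgi m, h] with ω hsub hω
  simp [hsub, hω, condExp_of_stronglyMeasurable hm hg hgi]

lemma integral_sq_le_of_abs_sub_le [IsProbabilityMeasure μ] {f g : Ω → ℝ} {K : ℝ}
    (hg : MemLp g 2 μ) (hfg : ∀ ω, |f ω - g ω| ≤ K) :
    ∫ ω, f ω ^ 2 ∂μ ≤ 2 * ∫ ω, g ω ^ 2 ∂μ + 2 * K ^ 2 := by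
  have hg2 : Integrable (fun ω => 2 * g ω ^ 2) μ := hg.integrable_sq.const_mul 2
  have hpt : ∀ ω, f ω ^ 2 ≤ 2 * g ω ^ 2 + 2 * K ^ 2 := fun ω => by
    nlinarith [sq_nonneg (2 * g ω - f ω), abs_nonneg (f ω - g ω), sq_abs (f ω - g ω), hfg ω]
  calc ∫ ω, f ω ^ 2 ∂μ ≤ ∫ ω, 2 * g ω ^ 2 + 2 * K ^ 2 ∂μ :=
        integral_mono_of_nonneg (ae_of_all _ fun ω => sq_nonneg _)
          (hg2.add (integrable_const _)) (ae_of_all _ hpt)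
    _ = 2 * ∫ ω, g ω ^ 2 ∂μ + 2 * K ^ 2 := by
        rw [integral_add hg2 (integrable_const _), integral_const_mul]
        simp

lemma exists_integral_sq_div_le_of_linear_growth [IsProbabilityMeasure μ] {f g : ℕ → Ω → ℝ}
    {L a C : ℝ} (hg : ∀ n, MemLp (g n) 2 μ) (hfg : ∀ n ω, |f n ω - g n ω| ≤ L)
    (hgrowth : ∀ n, ∫ ω, g n ω ^ 2 ∂μ ≤ a + n * C) :
    ∃ B, ∀ n : ℕ, 1 ≤ n → (∫ ω, f n ω ^ 2 ∂μ) / n ≤ B := by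
  refine ⟨2 * |a| + 2 * |C| + 2 * L ^ 2, fun n hn => ?_⟩
  have hn' : (1 : ℝ) ≤ n := by exact_mod_cast hn
  rw [div_le_iff₀ (by positivity)]
  have := (integral_sq_le_of_abs_sub_le (hg n) (hfg n)).trans
    (add_le_add_left (mul_le_mul_of_nonneg_left (hgrowth n) zero_le_two) _)
  nlinarith [le_abs_self a, le_abs_self C, abs_nonneg a, abs_nonneg C, sq_nonneg L,
    mul_le_mul_of_nonneg_left hn' (abs_nonneg a), mul_le_mul_of_nonneg_left hn' (sq_nonneg L),
    mul_le_mul_of_nonneg_right (le_abs_self C) (zero_le_one.trans hn')]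

end Moments

lemma abs_sub_sub_mul_le {a b h v K L : ℝ} (ha : |a| ≤ K) (hb : |b| ≤ K) (hv : |v| ≤ L) :
    |a - (b - h * v)| ≤ 2 * K + |h| * L := by
  calc |a - (b - h * v)| ≤ |a| + (|b| + |h * v|) := by
        linarith [abs_sub a (b - h * v), abs_sub b (h * v)]
    _ ≤ K + (K + |h| * L) := by rw [abs_mul]; gcongr
    _ = 2 * K + |h| * L := by ring

section NoiseAndMartingaleDifference

variable {Ω : Type*} {mΩ : MeasurableSpace Ω} {μ : Measure Ω} [IsProbabilityMeasure μ]
  {ℱ : Filtration ℕ mΩ} {M ξ R : ℕ → Ω → ℝ} {c s K : ℝ}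

lemma memLp_and_integral_sq_le_of_noise_add_martingaleDiff
    (hM₀ : MemLp (M 0) 2 μ) (hMℱ : StronglyAdapted ℱ M)
    (hinc : ∀ n ω, M (n + 1) ω = M n ω + (c * ξ n ω + R n ω))
    (hξ : ∀ n, MemLp (ξ n) 2 μ) (hMξ : ∀ n, IndepFun (M n) (ξ n) μ)
    (hξ_mean : ∀ n, ∫ ω, ξ n ω ∂μ = 0) (hξ_sq : ∀ n, ∫ ω, ξ n ω ^ 2 ∂μ ≤ s)
    (hR : ∀ n, AEStronglyMeasurable (R n) μ) (hRK : ∀ n ω, |R n ω| ≤ K)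
    (hRℱ : ∀ n, μ[R n | ℱ n] =ᵐ[μ] 0) :
    (∀ n, MemLp (M n) 2 μ) ∧
      ∀ n, ∫ ω, M n ω ^ 2 ∂μ ≤ ∫ ω, M 0 ω ^ 2 ∂μ + n * (2 * c ^ 2 * s + 2 * K ^ 2) := by
  have hR₂ : ∀ n, MemLp (R n) 2 μ := fun n =>
    MemLp.of_bound (hR n) K (ae_of_all _ fun ω => (Real.norm_eq_abs _).trans_le (hRK n ω))
  have hD : ∀ n, MemLp (fun ω => c * ξ n ω + R n ω) 2 μ := fun n =>
    ((hξ n).const_mul c).add (hR₂ n)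
  have hM := memLp_of_increments hM₀ hD hinc
  have horth : ∀ n, ∫ ω, M n ω * (c * ξ n ω + R n ω) ∂μ = 0 := fun n => by
    have hMξ₀ : ∫ ω, M n ω * ξ n ω ∂μ = 0 := by
      rw [(hMξ n).integral_fun_mul_eq_mul_integral (hM n).1 (hξ n).1, hξ_mean n, mul_zero]
    have hMR₀ : ∫ ω, M n ω * R n ω ∂μ = 0 := integral_mul_eq_zero_of_condExp_eq_zero (ℱ.le n)
      (hMℱ n) ((hM n).integrable_mul (hR₂ n)) ((hR₂ n).integrable one_le_two) (hRℱ n)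
    have hMξi : Integrable (fun ω => c * (M n ω * ξ n ω)) μ :=
      ((hM n).integrable_mul (hξ n)).const_mul c
    have hMRi : Integrable (fun ω => M n ω * R n ω) μ := (hM n).integrable_mul (hR₂ n)
    simp_rw [mul_add, ← mul_assoc, mul_comm (M n _) c, mul_assoc]
    rw [integral_add hMξi hMRi, integral_const_mul, hMξ₀, hMR₀, mul_zero, add_zero]
  have hDsq : ∀ n, ∫ ω, (c * ξ n ω + R n ω) ^ 2 ∂μ ≤ 2 * c ^ 2 * s + 2 * K ^ 2 := fun n => by
    have h := integral_sq_le_of_abs_sub_le (f := fun ω => c * ξ n ω + R n ω)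
      ((hξ n).const_mul c) fun ω => by simpa using hRK n ω
    simp_rw [mul_pow, integral_const_mul] at h
    nlinarith [hξ_sq n, sq_nonneg c]
  exact ⟨hM, integral_sq_le_of_orthogonal_increments hM hD hinc horth hDsq⟩

variable {x b w : ℕ → Ω → ℝ} {Δt K₁ : ℝ} {v : NNReal}

lemma exists_integral_sq_div_le_of_discreteCorrector (hx₀ : MemLp (x 0) 2 μ)
    (hx : ∀ n ω, x (n + 1) ω = x n ω + b n ω * Δt + c * ξ n ω)
    (hxℱ : StronglyAdapted ℱ x) (hbℱ : StronglyAdapted ℱ b) (hwℱ : StronglyAdapted ℱ w)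
    (hb : ∀ n ω, |b n ω| ≤ K₁) (hw : ∀ n ω, |w n ω| ≤ K)
    (hξ : ∀ n, HasLaw (ξ n) (gaussianReal 0 v) μ)
    (hξ_indep : ∀ n, IndepFun (fun ω => x n ω + w n ω) (ξ n) μ)
    (hcorr : ∀ n, μ[w (n + 1) | ℱ n] =ᵐ[μ] fun ω => w n ω - Δt * b n ω) :
    ∃ B, ∀ n : ℕ, 1 ≤ n → (∫ ω, x n ω ^ 2 ∂μ) / n ≤ B := by
  have hwm : ∀ n, StronglyMeasurable (w n) := fun n => (hwℱ n).mono (ℱ.le n)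
  have hbm : ∀ n, StronglyMeasurable (b n) := fun n => (hbℱ n).mono (ℱ.le n)
  have hwi : ∀ n, Integrable (w n) μ := fun n =>
    Integrable.of_bound (hwm n).aestronglyMeasurable K (ae_of_all _ (hw n))
  obtain ⟨hM, hgrowth⟩ := memLp_and_integral_sq_le_of_noise_add_martingaleDiff
    (M := fun n ω => x n ω + w n ω) (c := c) (R := fun n ω => w (n + 1) ω - (w n ω - Δt * b n ω))
    (hx₀.add (MemLp.of_bound (hwm 0).aestronglyMeasurable K (ae_of_all _ (hw 0))))
    (fun n => (hxℱ n).add (hwℱ n)) (fun n ω => by rw [hx]; ring)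
    (fun n => (hξ n).memLp_of_gaussianReal ENNReal.ofNat_ne_top) hξ_indep
    (fun n => (hξ n).integral_eq_of_gaussianReal) (fun n => (hξ n).integral_sq_of_gaussianReal.le)
    (fun n => ((hwm (n + 1)).sub ((hwm n).sub ((hbm n).const_mul Δt))).aestronglyMeasurable)
    (fun n ω => abs_sub_sub_mul_le (hw _ _) (hw _ _) (hb _ _))
    (fun n => condExp_sub_ae_eq_zero_of_condExp_ae_eq (ℱ.le n) (hwi (n + 1))
      ((hwℱ n).sub ((hbℱ n).const_mul Δt)) (hcorr n))
  exact exists_integral_sq_div_le_of_linear_growth (L := K) hM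
    (fun n ω => by simpa using hw n ω) hgrowth

end NoiseAndMartingaleDifference

noncomputable def structurePreservingStep (σ Δt : ℝ) (v₁ v₂ : ℝ → ℝ → ℝ) (i : ℕ)
    (x η : ℝ × ℝ) : ℝ × ℝ :=
  let y₁ := x.1 + v₁ (((i : ℝ) + 1/2) * Δt) x.2 * Δt
  (y₁ + σ * Real.sqrt Δt * η.1, x.2 + v₂ (((i : ℝ) + 1/2) * Δt) y₁ * Δt + σ * Real.sqrt Δt * η.2)

lemma measurable_structurePreservingStep {σ Δt : ℝ} {v₁ v₂ : ℝ → ℝ → ℝ}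
    (hv₁ : Measurable (Function.uncurry v₁)) (hv₂ : Measurable (Function.uncurry v₂)) (i : ℕ) :
    Measurable (Function.uncurry (structurePreservingStep σ Δt v₁ v₂ i)) := by
  have h₁ : Measurable (v₁ (((i : ℝ) + 1/2) * Δt)) := hv₁.of_uncurry_left
  have h₂ : Measurable (v₂ (((i : ℝ) + 1/2) * Δt)) := hv₂.of_uncurry_left
  unfold structurePreservingStep
  fun_prop

theorem stmt_10_general
    (σ : ℝ) (Δt : ℝ)
    (v₁ v₂ : ℝ → ℝ → ℝ)
    (hv₁_meas : Measurable (Function.uncurry v₁))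
    (hv₂_meas : Measurable (Function.uncurry v₂))
    (hv₁_bdd : ∃ M : ℝ, ∀ t x, |v₁ t x| ≤ M)
    {Ω : Type*} [MeasureSpace Ω] [IsProbabilityMeasure (volume : Measure Ω)]
    (ξ₁ ξ₂ : ℕ → Ω → ℝ)
    (hξ₁_meas : ∀ i, Measurable (ξ₁ i)) (hξ₂_meas : ∀ i, Measurable (ξ₂ i))
    (hξ₁_law : ∀ i, Measure.map (ξ₁ i) volume = gaussianReal 0 1)
    (hξ_indep : iIndepFun
      (fun p : ℕ × Bool => if p.2 then ξ₁ p.1 else ξ₂ p.1) volume)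
    (x₀ : ℝ × ℝ) (X : ℕ → Ω → ℝ × ℝ)
    (hX₀ : ∀ ω, X 0 ω = x₀)
    (hX_rec : ∀ (i : ℕ) (ω : Ω), X (i + 1) ω =
      ((X i ω).1 + v₁ (((i : ℝ) + 1/2) * Δt) (X i ω).2 * Δt
          + σ * Real.sqrt Δt * ξ₁ i ω,
       (X i ω).2 + v₂ (((i : ℝ) + 1/2) * Δt)
            ((X i ω).1 + v₁ (((i : ℝ) + 1/2) * Δt) (X i ω).2 * Δt) * Δt
          + σ * Real.sqrt Δt * ξ₂ i ω))
    (vhat : ℝ → ℝ × ℝ → ℝ)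
    (hvhat_meas : Measurable (fun z : ℝ × (ℝ × ℝ) => vhat z.1 z.2))
    (hvhat_bdd : ∃ M : ℝ, ∀ t x, |vhat t x| ≤ M)
    (hcorr : ∀ i : ℕ,
      condExp (⨆ j ∈ Set.Iic i, MeasurableSpace.comap (X j) inferInstance) volume
          (fun ω => vhat (((i : ℝ) + 1) * Δt) (X (i + 1) ω))
        =ᵐ[volume]
          fun ω => vhat ((i : ℝ) * Δt) (X i ω)
            - Δt * v₁ (((i : ℝ) + 1/2) * Δt) (X i ω).2) :
    ∃ B : ℝ, ∀ n : ℕ, 1 ≤ n → (∫ ω, ((X n ω).1) ^ 2) / (n : ℝ) ≤ B := by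
  obtain ⟨K₁, hK₁⟩ := hv₁_bdd
  obtain ⟨K, hK⟩ := hvhat_bdd
  have hv₁t : ∀ t, Measurable (v₁ t) := fun t => hv₁_meas.of_uncurry_left
  have hvhatt : ∀ t, Measurable (vhat t) := fun t => Measurable.of_uncurry_left hvhat_meas
  have hξ : ∀ p : ℕ × Bool, Measurable (if p.2 then ξ₁ p.1 else ξ₂ p.1) := by
    rintro ⟨i, _ | _⟩ <;> simp [hξ₁_meas, hξ₂_meas]
  have hXG : ∀ n, Measurable[pairNoiseSigma ξ₁ ξ₂ n] (X n) :=
    measurable_pairNoiseSigma_of_step_recursion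
      (measurable_structurePreservingStep hv₁_meas hv₂_meas) hX₀ hX_rec
  have hX : ∀ n, Measurable (X n) := fun n =>
    (hXG n).mono (iSup₂_le fun p _ => (hξ p).comap_le) le_rfl
  have hXsm : ∀ n, StronglyMeasurable (X n) := fun n => (hX n).stronglyMeasurable
  let ℱ : Filtration ℕ _ := Filtration.natural X hXsm
  have hXℱ : ∀ n, Measurable[ℱ n] (X n) := fun n =>
    (Filtration.stronglyAdapted_natural (β := fun _ => ℝ × ℝ) hXsm n).measurable
  exact exists_integral_sq_div_le_of_discreteCorrector (ℱ := ℱ) (ξ := ξ₁) (c := σ * Real.sqrt Δt)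
    (b := fun n ω => v₁ (((n : ℝ) + 1/2) * Δt) (X n ω).2) (w := fun n ω => vhat (n * Δt) (X n ω))
    (by simp only [hX₀]; exact memLp_const _) (fun n ω => by rw [hX_rec])
    (fun n => (measurable_fst.comp (hXℱ n)).stronglyMeasurable)
    (fun n => ((hv₁t _).comp (measurable_snd.comp (hXℱ n))).stronglyMeasurable)
    (fun n => ((hvhatt _).comp (hXℱ n)).stronglyMeasurable) (fun n ω => hK₁ _ _)
    (fun n ω => hK _ _) (fun n => ⟨(hξ₁_meas n).aemeasurable, hξ₁_law n⟩)
    (fun n => hξ_indep.indepFun_of_measurable_biSup hξ (j := (n, true)) (lt_irrefl n)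
      ((measurable_fst.comp (hXG n)).add ((hvhatt _).comp (hXG n))))
    -- `hcorr n` is about `ℱ n`, since `j ∈ Set.Iic n` unfolds to `j ≤ n`.
    (fun n => by simp only [Nat.cast_succ]; exact hcorr n)

/-- given a bounded measurable discrete corrector `v̂₁` for `v₁`
(satisfying `E[v̂₁(t_{i+1}, X^{i+1}) | 𝓕_i] = v̂₁(t_i, Xⁱ) − Δt·v₁(t_{i+1/2}, x₂ⁱ)` a.s.),
the second moment of the first component of the stochastic structure-preserving scheme
grows at most linearly in the number of steps. -/
theorem stmt_10
    (σ : ℝ) (hσ : 0 < σ) (N : ℕ) (hN : 0 < N) (Δt : ℝ) (hΔt : Δt = 1 / (N : ℝ))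
    (v₁ v₂ : ℝ → ℝ → ℝ)
    (hv₁_meas : Measurable (Function.uncurry v₁))
    (hv₂_meas : Measurable (Function.uncurry v₂))
    (hv₁_bdd : ∃ M : ℝ, ∀ t x, |v₁ t x| ≤ M) (hv₂_bdd : ∃ M : ℝ, ∀ t x, |v₂ t x| ≤ M)
    (hv₁_per : ∀ t x, v₁ (t + 1) x = v₁ t x ∧ v₁ t (x + 1) = v₁ t x)
    (hv₂_per : ∀ t x, v₂ (t + 1) x = v₂ t x ∧ v₂ t (x + 1) = v₂ t x)
    {Ω : Type*} [MeasureSpace Ω] [IsProbabilityMeasure (volume : Measure Ω)]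
    (ξ₁ ξ₂ : ℕ → Ω → ℝ)
    (hξ₁_meas : ∀ i, Measurable (ξ₁ i)) (hξ₂_meas : ∀ i, Measurable (ξ₂ i))
    (hξ₁_law : ∀ i, Measure.map (ξ₁ i) volume = gaussianReal 0 1)
    (hξ₂_law : ∀ i, Measure.map (ξ₂ i) volume = gaussianReal 0 1)
    (hξ_indep : iIndepFun
      (fun p : ℕ × Bool => if p.2 then ξ₁ p.1 else ξ₂ p.1) volume)
    (x₀ : ℝ × ℝ) (X : ℕ → Ω → ℝ × ℝ)
    (hX₀ : ∀ ω, X 0 ω = x₀)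
    (hX_rec : ∀ (i : ℕ) (ω : Ω), X (i + 1) ω =
      ((X i ω).1 + v₁ (((i : ℝ) + 1/2) * Δt) (X i ω).2 * Δt
          + σ * Real.sqrt Δt * ξ₁ i ω,
       (X i ω).2 + v₂ (((i : ℝ) + 1/2) * Δt)
            ((X i ω).1 + v₁ (((i : ℝ) + 1/2) * Δt) (X i ω).2 * Δt) * Δt
          + σ * Real.sqrt Δt * ξ₂ i ω))
    (vhat : ℝ → ℝ × ℝ → ℝ)
    (hvhat_meas : Measurable (fun z : ℝ × (ℝ × ℝ) => vhat z.1 z.2))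
    (hvhat_bdd : ∃ M : ℝ, ∀ t x, |vhat t x| ≤ M)
    (hvhat_per : ∀ t x, vhat (t + 1) x = vhat t x ∧
      vhat t (x + (1, 0)) = vhat t x ∧ vhat t (x + (0, 1)) = vhat t x)
    (hcorr : ∀ i : ℕ,
      condExp (⨆ j ∈ Set.Iic i, MeasurableSpace.comap (X j) inferInstance) volume
          (fun ω => vhat (((i : ℝ) + 1) * Δt) (X (i + 1) ω))
        =ᵐ[volume]
          fun ω => vhat ((i : ℝ) * Δt) (X i ω)
            - Δt * v₁ (((i : ℝ) + 1/2) * Δt) (X i ω).2) :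
    ∃ B : ℝ, ∀ n : ℕ, 1 ≤ n → (∫ ω, ((X n ω).1) ^ 2) / (n : ℝ) ≤ B :=
  stmt_10_general σ Δt v₁ v₂ hv₁_meas hv₂_meas hv₁_bdd ξ₁ ξ₂ hξ₁_meas hξ₂_meas hξ₁_law hξ_indep x₀ X
    hX₀ hX_rec vhat hvhat_meas hvhat_bdd hcorr
end

section
/- Assume there exists a discrete corrector v̂₁ for v₁, i.e., a bounded measurable function v̂₁ : ℝ × ℝ² → ℝ, 1-periodic in each argument, such that for every i ≥ 0, E[v̂₁(t_{i+1}, X^{i+1}) | 𝓕_i] = v̂₁(t_i, Xⁱ) − Δt·v₁(t_{i+1/2}, x₂ⁱ) almost surely. Then for every n ≥ 1 the following summation-by-parts identity holds: Δt·Σ_{i=0}^{n−1} E[x₁ⁱ · v₁(t_{i+1/2}, x₂ⁱ)] = Σ_{i=1}^{n} E[v̂₁(t_i, Xⁱ)·(x₁ⁱ − x₁^{i−1})] + v̂₁(t₀, X⁰)·x₁⁰ − E[v̂₁(t_n, Xⁿ)·x₁ⁿ]. -/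
/-!
Write `Uᵢ = v̂₁(tᵢ, Xⁱ)`. The corrector equation says
`E[U_{i+1} | 𝓕ᵢ] = Uᵢ - Δt·v₁(t_{i+1/2}, x₂ⁱ)`, and `x₁ⁱ` is `𝓕ᵢ`-measurable, so pulling it out
of the conditional expectation gives
`E[U_{i+1} x₁ⁱ] = E[Uᵢ x₁ⁱ] - Δt·E[x₁ⁱ v₁(t_{i+1/2}, x₂ⁱ)]`. Hence
`E[U_{i+1}(x₁ⁱ⁺¹ - x₁ⁱ)] = E[U_{i+1} x₁ⁱ⁺¹] - E[Uᵢ x₁ⁱ] + Δt·E[x₁ⁱ v₁(t_{i+1/2}, x₂ⁱ)]`,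
which telescopes when summed. All products are integrable because `U` is bounded and `x₁ⁱ` is
a sum of bounded drifts and Gaussian increments.
-/

open MeasureTheory ProbabilityTheory Finset

section SummationByParts

variable {Ω : Type*} {m m₀ : MeasurableSpace Ω} {μ : Measure Ω}

theorem mul_ae_eq_condExp_mul_of_condExp_ae_eq {f g h : Ω → ℝ}
    (hf : StronglyMeasurable[m] f) (hfg : Integrable (f * g) μ) (hg : Integrable g μ)
    (hgh : μ[g | m] =ᵐ[μ] h) : f * h =ᵐ[μ] μ[f * g | m] := by
  filter_upwards [condExp_mul_of_stronglyMeasurable_left hf hfg hg, hgh] with ω hpull hω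
  simp only [hpull, Pi.mul_apply, hω]

theorem integral_mul_sub_eq_of_condExp_ae_eq [IsFiniteMeasure μ] (hm : m ≤ m₀)
    {y y' u u' d : Ω → ℝ} (hy : StronglyMeasurable[m] y) (hu' : Integrable u' μ)
    (huy : Integrable (fun ω => u ω * y ω) μ) (hu'y : Integrable (fun ω => u' ω * y ω) μ)
    (hu'y' : Integrable (fun ω => u' ω * y' ω) μ) (hcorr : μ[u' | m] =ᵐ[μ] u - d) :
    ∫ ω, u' ω * (y' ω - y ω) ∂μ
      = ∫ ω, u' ω * y' ω ∂μ - ∫ ω, u ω * y ω ∂μ + ∫ ω, y ω * d ω ∂μ := by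
  have hyu' : Integrable (fun ω => y ω * u' ω) μ := by simpa only [mul_comm] using hu'y
  have hpull := mul_ae_eq_condExp_mul_of_condExp_ae_eq hy hyu' hu' hcorr
  have hyd : Integrable (fun ω => y ω * d ω) μ := by
    have : Integrable (y * (u - d)) μ := integrable_condExp.congr hpull.symm
    exact (huy.sub this).congr
      (.of_forall fun ω => by simp only [Pi.mul_apply, Pi.sub_apply]; ring)
  have hcond : ∫ ω, y ω * u' ω ∂μ = ∫ ω, u ω * y ω ∂μ - ∫ ω, y ω * d ω ∂μ := by
    rw [← integral_condExp hm, ← integral_sub huy hyd]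
    exact integral_congr_ae <| hpull.symm.mono fun ω hω => hω.trans <| by
      simp only [Pi.mul_apply, Pi.sub_apply]; ring
  rw [sub_add, ← hcond, ← integral_sub hu'y' hyu']
  simp only [mul_sub, mul_comm (y _)]

theorem sum_integral_mul_eq_of_condExp_ae_eq [IsFiniteMeasure μ] (ℱ : ℕ → MeasurableSpace Ω)
    (hℱ : ∀ i, ℱ i ≤ m₀) {Y U D : ℕ → Ω → ℝ} (hY : ∀ i, StronglyMeasurable[ℱ i] (Y i))
    (hU : ∀ i, Integrable (U i) μ) (hUY : ∀ i j, Integrable (fun ω => U i ω * Y j ω) μ)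
    (hcorr : ∀ i, μ[U (i + 1) | ℱ i] =ᵐ[μ] U i - D i) (n : ℕ) :
    ∑ i ∈ range n, ∫ ω, Y i ω * D i ω ∂μ
      = ∑ i ∈ range n, ∫ ω, U (i + 1) ω * (Y (i + 1) ω - Y i ω) ∂μ
        + ∫ ω, U 0 ω * Y 0 ω ∂μ - ∫ ω, U n ω * Y n ω ∂μ := by
  have hstep i := integral_mul_sub_eq_of_condExp_ae_eq (hℱ i) (hY i) (hU (i + 1)) (hUY i i)
    (hUY (i + 1) i) (hUY (i + 1) (i + 1)) (hcorr i)
  simp only [hstep, sum_add_distrib,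
    sum_range_sub (fun i => ∫ ω, U i ω * Y i ω ∂μ)]
  ring

end SummationByParts

theorem measurable_of_succ_eq {Ω α β : Type*} [MeasurableSpace Ω] [MeasurableSpace α]
    [MeasurableSpace β] {X : ℕ → Ω → α} {ξ : ℕ → Ω → β} (Φ : ℕ → α → β → α)
    (hΦ : ∀ i, Measurable (Function.uncurry (Φ i))) (hξ : ∀ i, Measurable (ξ i))
    (hX₀ : Measurable (X 0)) (hX : ∀ i ω, X (i + 1) ω = Φ i (X i ω) (ξ i ω)) :
    ∀ i, Measurable (X i)
  | 0 => hX₀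
  | i + 1 => by
    rw [funext (hX i)]
    exact (hΦ i).comp ((measurable_of_succ_eq Φ hΦ hξ hX₀ hX i).prodMk (hξ i))

theorem integrable_of_succ_sub {Ω : Type*} [MeasurableSpace Ω] {μ : Measure Ω} {Y : ℕ → Ω → ℝ}
    (hY₀ : Integrable (Y 0) μ) (hY : ∀ i, Integrable (fun ω => Y (i + 1) ω - Y i ω) μ) :
    ∀ i, Integrable (Y i) μ
  | 0 => hY₀
  | i + 1 =>
    ((hY i).add (integrable_of_succ_sub hY₀ hY i)).congr (.of_forall fun _ => sub_add_cancel _ _)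

/-- `Xⁱ⁺¹ = splittingStep σ Δt t_{i+1/2} v₁ v₂ Xⁱ (ξ₁ⁱ, ξ₂ⁱ)`. -/
noncomputable def splittingStep (σ Δt t : ℝ) (v₁ v₂ : ℝ → ℝ → ℝ) (x ξ : ℝ × ℝ) : ℝ × ℝ :=
  (x.1 + v₁ t x.2 * Δt + σ * Real.sqrt Δt * ξ.1,
    x.2 + v₂ t (x.1 + v₁ t x.2 * Δt) * Δt + σ * Real.sqrt Δt * ξ.2)

theorem measurable_splittingStep (σ Δt t : ℝ) {v₁ v₂ : ℝ → ℝ → ℝ}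
    (hv₁ : Measurable (Function.uncurry v₁)) (hv₂ : Measurable (Function.uncurry v₂)) :
    Measurable (Function.uncurry (splittingStep σ Δt t v₁ v₂)) := by
  have hv₁t : Measurable fun p : (ℝ × ℝ) × (ℝ × ℝ) => v₁ t p.1.2 :=
    hv₁.comp (measurable_const.prodMk (by fun_prop))
  have hy : Measurable fun p : (ℝ × ℝ) × (ℝ × ℝ) => p.1.1 + v₁ t p.1.2 * Δt := by fun_prop
  have hv₂t : Measurable fun p : (ℝ × ℝ) × (ℝ × ℝ) => v₂ t (p.1.1 + v₁ t p.1.2 * Δt) :=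
    hv₂.comp (measurable_const.prodMk hy)
  unfold splittingStep Function.uncurry
  fun_prop

theorem stmt_11_general
    (σ : ℝ) (Δt : ℝ)
    (v₁ v₂ : ℝ → ℝ → ℝ)
    (hv₁_meas : Measurable (Function.uncurry v₁))
    (hv₂_meas : Measurable (Function.uncurry v₂))
    (hv₁_bdd : ∃ M : ℝ, ∀ t x, |v₁ t x| ≤ M)
    {Ω : Type*} [MeasureSpace Ω] [IsProbabilityMeasure (volume : Measure Ω)]
    (ξ₁ ξ₂ : ℕ → Ω → ℝ)
    (hξ₁_meas : ∀ i, Measurable (ξ₁ i)) (hξ₂_meas : ∀ i, Measurable (ξ₂ i))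
    (hξ₁_law : ∀ i, Measure.map (ξ₁ i) volume = gaussianReal 0 1)
    (x₀ : ℝ × ℝ) (X : ℕ → Ω → ℝ × ℝ)
    (hX₀ : ∀ ω, X 0 ω = x₀)
    (hX_rec : ∀ (i : ℕ) (ω : Ω), X (i + 1) ω =
      ((X i ω).1 + v₁ (((i : ℝ) + 1/2) * Δt) (X i ω).2 * Δt
          + σ * Real.sqrt Δt * ξ₁ i ω,
       (X i ω).2 + v₂ (((i : ℝ) + 1/2) * Δt)
            ((X i ω).1 + v₁ (((i : ℝ) + 1/2) * Δt) (X i ω).2 * Δt) * Δt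
          + σ * Real.sqrt Δt * ξ₂ i ω))
    (vhat : ℝ → ℝ × ℝ → ℝ)
    (hvhat_meas : Measurable (fun z : ℝ × (ℝ × ℝ) => vhat z.1 z.2))
    (hvhat_bdd : ∃ M : ℝ, ∀ t x, |vhat t x| ≤ M)
    (hcorr : ∀ i : ℕ,
      condExp (⨆ j ∈ Set.Iic i, MeasurableSpace.comap (X j) inferInstance) volume
          (fun ω => vhat (((i : ℝ) + 1) * Δt) (X (i + 1) ω))
        =ᵐ[volume]
          fun ω => vhat ((i : ℝ) * Δt) (X i ω)
            - Δt * v₁ (((i : ℝ) + 1/2) * Δt) (X i ω).2) :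
    ∀ n : ℕ, 1 ≤ n →
      Δt * ∑ i ∈ Finset.range n,
          ∫ ω, (X i ω).1 * v₁ (((i : ℝ) + 1/2) * Δt) (X i ω).2
      = (∑ i ∈ Finset.range n,
            ∫ ω, vhat (((i : ℝ) + 1) * Δt) (X (i + 1) ω)
              * ((X (i + 1) ω).1 - (X i ω).1))
        + vhat 0 x₀ * x₀.1
        - ∫ ω, vhat ((n : ℝ) * Δt) (X n ω) * (X n ω).1 := by
  intro n _
  obtain ⟨M₁, hM₁⟩ := hv₁_bdd
  obtain ⟨M, hM⟩ := hvhat_bdd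
  set ℱ : ℕ → MeasurableSpace Ω :=
    fun i => ⨆ j ∈ Set.Iic i, MeasurableSpace.comap (X j) inferInstance
  have hX : ∀ i, Measurable (X i) :=
    measurable_of_succ_eq (fun i => splittingStep σ Δt (((i : ℝ) + 1/2) * Δt) v₁ v₂)
      (fun i => measurable_splittingStep σ Δt _ hv₁_meas hv₂_meas)
      (fun i => (hξ₁_meas i).prodMk (hξ₂_meas i))
      (by simp only [funext hX₀, measurable_const]) hX_rec
  have hXℱ i : Measurable[ℱ i] (X i) :=
    .of_comap_le (le_biSup (fun j => MeasurableSpace.comap (X j) inferInstance) Set.self_mem_Iic)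
  have hξ₁ i : Integrable (ξ₁ i) :=
    (HasLaw.hasGaussianLaw ⟨(hξ₁_meas i).aemeasurable, hξ₁_law i⟩).integrable
  have hv₁X c i : Integrable (fun ω => v₁ c (X i ω).2) :=
    .of_bound (hv₁_meas.comp (measurable_const.prodMk (hX i).snd)).aestronglyMeasurable M₁
      (.of_forall fun ω => hM₁ c _)
  have hx₁ : ∀ i, Integrable (fun ω => (X i ω).1) :=
    integrable_of_succ_sub (by simp only [hX₀, integrable_const]) fun i =>
      (((hv₁X _ i).mul_const Δt).add ((hξ₁ i).const_mul (σ * Real.sqrt Δt))).congr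
        (.of_forall fun ω => by simp only [Pi.add_apply, hX_rec i ω]; ring)
  have hvhatX c i : AEStronglyMeasurable (fun ω => vhat c (X i ω)) :=
    (hvhat_meas.comp (measurable_const.prodMk (hX i))).aestronglyMeasurable
  have key := sum_integral_mul_eq_of_condExp_ae_eq (μ := volume) ℱ
    (fun i => iSup₂_le fun j _ => (hX j).comap_le)
    (Y := fun i ω => (X i ω).1) (U := fun i ω => vhat (i * Δt) (X i ω))
    (D := fun i ω => Δt * v₁ (((i : ℝ) + 1/2) * Δt) (X i ω).2)
    (fun i => (hXℱ i).fst.stronglyMeasurable)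
    (fun i => .of_bound (hvhatX _ i) M (.of_forall fun ω => hM _ _))
    (fun i j => (hx₁ j).bdd_mul (hvhatX _ i) (.of_forall fun ω => hM _ _))
    (fun i => by rw [Nat.cast_succ]; exact hcorr i) n
  simp only [Nat.cast_succ, Nat.cast_zero, zero_mul, hX₀, integral_const, probReal_univ, one_smul,
    mul_left_comm _ Δt, integral_const_mul, ← mul_sum] at key
  exact key

/-- given a bounded measurable discrete corrector `v̂₁` for `v₁`
(satisfying `E[v̂₁(t_{i+1}, X^{i+1}) | 𝓕_i] = v̂₁(t_i, Xⁱ) − Δt·v₁(t_{i+1/2}, x₂ⁱ)` a.s.),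
the summation-by-parts identity
`Δt·Σ_{i<n} E[x₁ⁱ v₁(t_{i+1/2}, x₂ⁱ)] = Σ_{i=1}^{n} E[v̂₁(t_i, Xⁱ)(x₁ⁱ − x₁^{i−1})]
 + v̂₁(t₀, X⁰)x₁⁰ − E[v̂₁(t_n, Xⁿ)x₁ⁿ]` holds for every `n ≥ 1`. -/
theorem stmt_11
    (σ : ℝ) (hσ : 0 < σ) (N : ℕ) (hN : 0 < N) (Δt : ℝ) (hΔt : Δt = 1 / (N : ℝ))
    (v₁ v₂ : ℝ → ℝ → ℝ)
    (hv₁_meas : Measurable (Function.uncurry v₁))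
    (hv₂_meas : Measurable (Function.uncurry v₂))
    (hv₁_bdd : ∃ M : ℝ, ∀ t x, |v₁ t x| ≤ M) (hv₂_bdd : ∃ M : ℝ, ∀ t x, |v₂ t x| ≤ M)
    (hv₁_per : ∀ t x, v₁ (t + 1) x = v₁ t x ∧ v₁ t (x + 1) = v₁ t x)
    (hv₂_per : ∀ t x, v₂ (t + 1) x = v₂ t x ∧ v₂ t (x + 1) = v₂ t x)
    {Ω : Type*} [MeasureSpace Ω] [IsProbabilityMeasure (volume : Measure Ω)]
    (ξ₁ ξ₂ : ℕ → Ω → ℝ)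
    (hξ₁_meas : ∀ i, Measurable (ξ₁ i)) (hξ₂_meas : ∀ i, Measurable (ξ₂ i))
    (hξ₁_law : ∀ i, Measure.map (ξ₁ i) volume = gaussianReal 0 1)
    (hξ₂_law : ∀ i, Measure.map (ξ₂ i) volume = gaussianReal 0 1)
    (hξ_indep : iIndepFun
      (fun p : ℕ × Bool => if p.2 then ξ₁ p.1 else ξ₂ p.1) volume)
    (x₀ : ℝ × ℝ) (X : ℕ → Ω → ℝ × ℝ)
    (hX₀ : ∀ ω, X 0 ω = x₀)
    (hX_rec : ∀ (i : ℕ) (ω : Ω), X (i + 1) ω =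
      ((X i ω).1 + v₁ (((i : ℝ) + 1/2) * Δt) (X i ω).2 * Δt
          + σ * Real.sqrt Δt * ξ₁ i ω,
       (X i ω).2 + v₂ (((i : ℝ) + 1/2) * Δt)
            ((X i ω).1 + v₁ (((i : ℝ) + 1/2) * Δt) (X i ω).2 * Δt) * Δt
          + σ * Real.sqrt Δt * ξ₂ i ω))
    (vhat : ℝ → ℝ × ℝ → ℝ)
    (hvhat_meas : Measurable (fun z : ℝ × (ℝ × ℝ) => vhat z.1 z.2))
    (hvhat_bdd : ∃ M : ℝ, ∀ t x, |vhat t x| ≤ M)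
    (hvhat_per : ∀ t x, vhat (t + 1) x = vhat t x ∧
      vhat t (x + (1, 0)) = vhat t x ∧ vhat t (x + (0, 1)) = vhat t x)
    (hcorr : ∀ i : ℕ,
      condExp (⨆ j ∈ Set.Iic i, MeasurableSpace.comap (X j) inferInstance) volume
          (fun ω => vhat (((i : ℝ) + 1) * Δt) (X (i + 1) ω))
        =ᵐ[volume]
          fun ω => vhat ((i : ℝ) * Δt) (X i ω)
            - Δt * v₁ (((i : ℝ) + 1/2) * Δt) (X i ω).2) :
    ∀ n : ℕ, 1 ≤ n →
      Δt * ∑ i ∈ Finset.range n,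
          ∫ ω, (X i ω).1 * v₁ (((i : ℝ) + 1/2) * Δt) (X i ω).2
      = (∑ i ∈ Finset.range n,
            ∫ ω, vhat (((i : ℝ) + 1) * Δt) (X (i + 1) ω)
              * ((X (i + 1) ω).1 - (X i ω).1))
        + vhat 0 x₀ * x₀.1
        - ∫ ω, vhat ((n : ℝ) * Δt) (X n ω) * (X n ω).1 :=
  stmt_11_general σ Δt v₁ v₂ hv₁_meas hv₂_meas hv₁_bdd ξ₁ ξ₂ hξ₁_meas hξ₂_meas hξ₁_law x₀ X hX₀
    hX_rec vhat hvhat_meas hvhat_bdd hcorr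
end
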